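/- arXiv:1303.0346 — 5 statements merged into one kernel-verified Lean document; each statement's English description precedes it below -/
import Mathlib

section
/- Let X be a binomial random variable with k trials and success probability p, and let β be a real number with 0 < p < β ≤ 1. Then Pr( X > β·k ) ≤ exp( −(β − p)²·k / (β + p) ). -/
open Finset
open scoped Classical BigOperators

lemma aux_log_ineq (x : ℝ) (hx : 1 ≤ x) : 2 * (x - 1) ≤ (x + 1) * Real.log x := by
  have hmono : MonotoneOn (fun y : ℝ => (y + 1) * Real.log y - 2 * (y - 1)) (Set.Ici 1) := by
    have hsub : Set.Ici (1:ℝ) ⊆ {0}ᶜ := by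
      intro y hy; simp only [Set.mem_compl_iff, Set.mem_singleton_iff]
      intro h; simp [h] at hy; linarith
    apply monotoneOn_of_hasDerivWithinAt_nonneg (convex_Ici 1)
      (f' := fun y => Real.log y + (y + 1) / y - 2)
    · exact (((continuous_id.add continuous_const).continuousOn.mul
        (Real.continuousOn_log.mono hsub)).sub
        (continuous_const.mul (continuous_id.sub continuous_const)).continuousOn)
    · intro y hy
      rw [interior_Ici] at hy
      have hy0 : (0:ℝ) < y := lt_trans one_pos hy
      have h1 : HasDerivAt (fun y : ℝ => (y + 1) * Real.log y - 2 * (y - 1))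
          (Real.log y + (y + 1) / y - 2) y := by
        have := (((hasDerivAt_id y).add_const 1).mul (Real.hasDerivAt_log hy0.ne')).sub
          (((hasDerivAt_id y).sub_const 1).const_mul 2)
        exact this.congr_deriv (by simp only [id]; ring)
      exact h1.hasDerivWithinAt
    · intro y hy
      rw [interior_Ici] at hy
      have hy0 : (0:ℝ) < y := lt_trans one_pos hy
      have hlog : Real.log y⁻¹ ≤ y⁻¹ - 1 := Real.log_le_sub_one_of_pos (by positivity)
      rw [Real.log_inv] at hlog
      have : 1 - y⁻¹ ≤ Real.log y := by linarith
      have h2 : (y + 1) / y = 1 + y⁻¹ := by field_simp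
      rw [h2]; linarith
  have h0 : (fun y : ℝ => (y + 1) * Real.log y - 2 * (y - 1)) 1 = 0 := by simp
  have := hmono (Set.self_mem_Ici) (Set.mem_Ici.2 hx) hx
  rw [h0] at this
  simp only at this
  linarith

/-- Chernoff-type upper-tail bound for a binomial random variable:
if `X ~ Binomial(k, p)` and `0 < p < β ≤ 1`, then
`Pr(X > β·k) = Σ_{i > β·k} C(k,i)·p^i·(1−p)^{k−i} ≤ exp(−(β−p)²·k/(β+p))`. -/
theorem binomial_upper_tail_chernoff (k : ℕ) (p β : ℝ)
    (hp : 0 < p) (hpβ : p < β) (hβ : β ≤ 1) :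
    (∑ i ∈ (Finset.range (k + 1)).filter (fun i : ℕ => β * k < (i : ℝ)),
        (k.choose i : ℝ) * p ^ i * (1 - p) ^ (k - i))
      ≤ Real.exp (-(β - p) ^ 2 * k / (β + p)) := by
  have hβ0 : 0 < β := lt_trans hp hpβ
  have hp1 : p < 1 := lt_of_lt_of_le hpβ hβ
  set t : ℝ := Real.log (β / p) with ht_def
  have hdiv1 : 1 < β / p := (one_lt_div hp).2 hpβ
  have ht : 0 < t := Real.log_pos hdiv1
  have hexp_t : Real.exp t = β / p := Real.exp_log (by positivity)
  -- Step 1: bound the tail sum by the full MGF sum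
  have step1 : (∑ i ∈ (Finset.range (k + 1)).filter (fun i : ℕ => β * k < (i : ℝ)),
        (k.choose i : ℝ) * p ^ i * (1 - p) ^ (k - i))
      ≤ ∑ i ∈ Finset.range (k + 1),
        ((k.choose i : ℝ) * p ^ i * (1 - p) ^ (k - i)) * Real.exp (t * i) *
          Real.exp (-(t * (β * k))) := by
    calc (∑ i ∈ (Finset.range (k + 1)).filter (fun i : ℕ => β * k < (i : ℝ)),
        (k.choose i : ℝ) * p ^ i * (1 - p) ^ (k - i))
        ≤ ∑ i ∈ (Finset.range (k + 1)).filter (fun i : ℕ => β * k < (i : ℝ)),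
          ((k.choose i : ℝ) * p ^ i * (1 - p) ^ (k - i)) * Real.exp (t * i) *
            Real.exp (-(t * (β * k))) := by
          apply Finset.sum_le_sum
          intro i hi
          have hib : β * k < (i : ℝ) := (Finset.mem_filter.1 hi).2
          have hterm : (0:ℝ) ≤ (k.choose i : ℝ) * p ^ i * (1 - p) ^ (k - i) :=
            mul_nonneg (mul_nonneg (Nat.cast_nonneg _) (pow_nonneg hp.le _))
              (pow_nonneg (by linarith) _)
          have : (1:ℝ) ≤ Real.exp (t * i) * Real.exp (-(t * (β * k))) := by
            rw [← Real.exp_add]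
            rw [show t * i + -(t * (β * k)) = t * (i - β * k) by ring]
            have : (0:ℝ) ≤ t * (i - β * k) := by
              apply mul_nonneg ht.le; linarith
            calc (1:ℝ) = Real.exp 0 := Real.exp_zero.symm
              _ ≤ _ := Real.exp_le_exp.2 this
          calc (k.choose i : ℝ) * p ^ i * (1 - p) ^ (k - i)
              = ((k.choose i : ℝ) * p ^ i * (1 - p) ^ (k - i)) * 1 := by ring
            _ ≤ ((k.choose i : ℝ) * p ^ i * (1 - p) ^ (k - i)) *
                (Real.exp (t * i) * Real.exp (-(t * (β * k)))) :=
                mul_le_mul_of_nonneg_left this hterm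
            _ = _ := by ring
      _ ≤ _ := by
          apply Finset.sum_le_sum_of_subset_of_nonneg (Finset.filter_subset _ _)
          intro i _ _
          exact mul_nonneg (mul_nonneg (mul_nonneg (mul_nonneg (Nat.cast_nonneg _)
            (pow_nonneg hp.le _)) (pow_nonneg (by linarith) _)) (Real.exp_pos _).le)
            (Real.exp_pos _).le
  -- Step 2: evaluate the MGF sum
  have step2 : (∑ i ∈ Finset.range (k + 1),
        ((k.choose i : ℝ) * p ^ i * (1 - p) ^ (k - i)) * Real.exp (t * i) *
          Real.exp (-(t * (β * k))))
      = (β + (1 - p)) ^ k * Real.exp (-(t * (β * k))) := by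
    rw [← Finset.sum_mul]
    congr 1
    have hpet : p * Real.exp t = β := by
      rw [hexp_t]; field_simp
    calc (∑ i ∈ Finset.range (k + 1),
          ((k.choose i : ℝ) * p ^ i * (1 - p) ^ (k - i)) * Real.exp (t * i))
        = ∑ i ∈ Finset.range (k + 1),
          (p * Real.exp t) ^ i * (1 - p) ^ (k - i) * (k.choose i : ℝ) := by
          apply Finset.sum_congr rfl
          intro i _
          rw [mul_comm t (i:ℝ), Real.exp_nat_mul, mul_pow]
          ring
      _ = (p * Real.exp t + (1 - p)) ^ k := (add_pow _ _ _).symm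
      _ = (β + (1 - p)) ^ k := by rw [hpet]
  -- Step 3: bound
  have step3 : (β + (1 - p)) ^ k * Real.exp (-(t * (β * k)))
      ≤ Real.exp (-(β - p) ^ 2 * k / (β + p)) := by
    have h1 : (β + (1 - p)) ^ k ≤ Real.exp ((β - p) * k) := by
      have : β + (1 - p) ≤ Real.exp (β - p) := by
        have := Real.add_one_le_exp (β - p)
        linarith
      calc (β + (1 - p)) ^ k ≤ (Real.exp (β - p)) ^ k :=
            pow_le_pow_left₀ (by linarith) this k
        _ = Real.exp ((β - p) * k) := by
            rw [← Real.exp_nat_mul]; ring_nf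
    calc (β + (1 - p)) ^ k * Real.exp (-(t * (β * k)))
        ≤ Real.exp ((β - p) * k) * Real.exp (-(t * (β * k))) :=
          mul_le_mul_of_nonneg_right h1 (Real.exp_pos _).le
      _ = Real.exp ((β - p) * k - t * (β * k)) := by rw [← Real.exp_add]; ring_nf
      _ ≤ Real.exp (-(β - p) ^ 2 * k / (β + p)) := by
          apply Real.exp_le_exp.2
          have hx := aux_log_ineq (β / p) hdiv1.le
          -- t = log (β/p), and 2*(β/p - 1) ≤ (β/p + 1) * t
          rw [← ht_def] at hx
          have hβp : (0:ℝ) < β + p := by linarith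
          have hlogge : 2 * (β - p) / (β + p) ≤ t := by
            rw [div_le_iff₀ hβp] at *
            have h2 : 2 * (β / p - 1) * p ≤ (β / p + 1) * t * p := by
              apply mul_le_mul_of_nonneg_right hx hp.le
            have e1 : 2 * (β / p - 1) * p = 2 * (β - p) := by field_simp
            have e2 : (β / p + 1) * t * p = t * (β + p) := by field_simp
            rw [e1, e2] at h2
            exact h2
          -- per-unit inequality times k
          have hk : (0:ℝ) ≤ (k:ℝ) := Nat.cast_nonneg k
          rw [div_le_iff₀ hβp] at hlogge
          rw [le_div_iff₀ hβp]
          nlinarith [mul_le_mul_of_nonneg_left hlogge (mul_nonneg hβ0.le hk)]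
  exact le_trans step1 (le_trans (le_of_eq step2) step3)
end

section
/- Let E = (E_1, …, E_n) be a vector of independent Bernoulli(p) bits with 0 ≤ p ≤ 1/2. Then for every center m ∈ {0,1}^n and every integer radius t ≥ 0, the probability that E lies in the Hamming ball of radius t around m is at most the probability that E lies in the Hamming ball of radius t around the all-zero string: Pr( d_H(E, m) ≤ t ) ≤ Pr( wt(E) ≤ t ) = Σ_{i ≤ t} C(n, i)·p^i·(1−p)^{n−i}, where wt denotes Hamming weight. -/
open Finset
open scoped Classical BigOperators

/-- Hamming weight of a binary string. -/
def wt {n : ℕ} (e : Fin n → Bool) : ℕ := hammingDist e (fun _ => false)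

lemma wt_le {n : ℕ} (e : Fin n → Bool) : wt e ≤ n := by
  simpa [wt] using (hammingDist_le_card_fintype : hammingDist e (fun _ => false) ≤ _)

lemma wt_eq {n : ℕ} (e : Fin n → Bool) : wt e = #{i | e i = true} := by
  unfold wt hammingDist
  congr 1
  apply Finset.filter_congr
  intro i _
  cases e i <;> simp

lemma card_wt_eq (n i : ℕ) :
    (Finset.univ.filter (fun e : Fin n → Bool => wt e = i)).card = n.choose i := by
  have : n.choose i = (Finset.powersetCard i (Finset.univ : Finset (Fin n))).card := by
    simp [Finset.card_powersetCard]
  rw [this]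
  apply Finset.card_bij' (fun e _ => ({j | e j = true} : Finset (Fin n)))
    (fun s _ => (fun j => decide (j ∈ s)))
  · intro e he
    simp only [Finset.mem_filter, Finset.mem_univ, true_and] at he
    simp [Finset.mem_powersetCard, ← wt_eq, he]
  · intro s hs
    simp only [Finset.mem_powersetCard] at hs
    simp only [Finset.mem_filter, Finset.mem_univ, true_and, wt_eq]
    rw [← hs.2]
    congr 1
    ext j; simp
  · intro e _; funext j; by_cases h : e j = true <;> simp [h]

  · intro s _; ext j; simp

lemma part2 (n : ℕ) (p : ℝ) (t : ℕ) :
    (∑ e ∈ Finset.univ.filter (fun e : Fin n → Bool => wt e ≤ t),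
          p ^ wt e * (1 - p) ^ (n - wt e))
        = ∑ i ∈ Finset.range (t + 1), (n.choose i : ℝ) * p ^ i * (1 - p) ^ (n - i) := by
  rw [← Finset.sum_fiberwise_of_maps_to (g := wt) (t := Finset.range (t + 1))
      (fun e he => by simp only [Finset.mem_filter] at he; simp [Nat.lt_succ_iff, he.2])]
  refine Finset.sum_congr rfl fun i hi => ?_
  simp only [Finset.mem_range, Nat.lt_succ_iff] at hi
  have h1 : (Finset.univ.filter (fun e : Fin n → Bool => wt e ≤ t)).filter (fun e => wt e = i)
      = Finset.univ.filter (fun e : Fin n → Bool => wt e = i) := by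
    ext e; simp only [Finset.mem_filter, Finset.mem_univ, true_and]
    constructor
    · exact fun h => h.2
    · exact fun h => ⟨h ▸ hi, h⟩
  rw [h1]
  rw [Finset.sum_congr rfl (fun e he => by
    simp only [Finset.mem_filter] at he
    rw [he.2])]
  rw [Finset.sum_const, card_wt_eq, nsmul_eq_mul, mul_assoc]

lemma f_anti {p : ℝ} (hp0 : 0 ≤ p) (hp : p ≤ 1/2) {n a b : ℕ} (hab : a ≤ b) (hbn : b ≤ n) :
    p ^ b * (1 - p) ^ (n - b) ≤ p ^ a * (1 - p) ^ (n - a) := by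
  have hq0 : (0:ℝ) ≤ 1 - p := by linarith
  have hpq : p ≤ 1 - p := by linarith
  have e1 : p ^ b = p ^ a * p ^ (b - a) := by rw [← pow_add]; congr 1; omega
  have e2 : (1 - p) ^ (n - a) = (1 - p) ^ (b - a) * (1 - p) ^ (n - b) := by
    rw [← pow_add]; congr 1; omega
  rw [e1, e2, mul_assoc]
  gcongr

lemma wt_xor {n : ℕ} (e m : Fin n → Bool) :
    wt (fun i => xor (e i) (m i)) = hammingDist e m := by
  unfold wt hammingDist
  congr 1
  apply Finset.filter_congr
  intro i _
  cases he : e i <;> cases hm : m i <;> simp [he, hm]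

lemma dist_xor {n : ℕ} (e m : Fin n → Bool) :
    hammingDist (fun i => xor (e i) (m i)) m = wt e := by
  unfold wt hammingDist
  congr 1
  apply Finset.filter_congr
  intro i _
  cases he : e i <;> cases hm : m i <;> simp [he, hm]

lemma part1 (n : ℕ) (p : ℝ) (hp0 : 0 ≤ p) (hp : p ≤ 1 / 2)
    (m : Fin n → Bool) (t : ℕ) :
    (∑ e ∈ Finset.univ.filter (fun e : Fin n → Bool => hammingDist e m ≤ t),
        p ^ wt e * (1 - p) ^ (n - wt e))
      ≤ ∑ e ∈ Finset.univ.filter (fun e : Fin n → Bool => wt e ≤ t),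
          p ^ wt e * (1 - p) ^ (n - wt e) := by
  set f : (Fin n → Bool) → ℝ := fun e => p ^ wt e * (1 - p) ^ (n - wt e) with hf
  set A : Finset (Fin n → Bool) := Finset.univ.filter (fun e => hammingDist e m ≤ t) with hA
  set B : Finset (Fin n → Bool) := Finset.univ.filter (fun e => wt e ≤ t) with hB
  set φ : (Fin n → Bool) → (Fin n → Bool) := fun e i => xor (e i) (m i) with hφ
  have hφφ : ∀ e, φ (φ e) = e := by
    intro e; funext i; simp [hφ, Bool.xor_assoc]
  have hmem : ∀ e ∈ A \ B, φ e ∈ B \ A := by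
    intro e he
    simp only [hA, hB, Finset.mem_sdiff, Finset.mem_filter, Finset.mem_univ, true_and,
      not_le] at he ⊢
    refine ⟨by rw [wt_xor]; exact he.1, ?_⟩
    rw [dist_xor]; omega
  have hmem' : ∀ e ∈ B \ A, φ e ∈ A \ B := by
    intro e he
    simp only [hA, hB, Finset.mem_sdiff, Finset.mem_filter, Finset.mem_univ, true_and,
      not_le] at he ⊢
    refine ⟨by rw [dist_xor]; exact he.1, ?_⟩
    rw [wt_xor]; omega
  have key : ∑ e ∈ A \ B, f e ≤ ∑ e ∈ B \ A, f e := by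
    calc ∑ e ∈ A \ B, f e ≤ ∑ e ∈ A \ B, f (φ e) := by
          apply Finset.sum_le_sum
          intro e he
          have h := hmem e he
          simp only [hA, hB, Finset.mem_sdiff, Finset.mem_filter, Finset.mem_univ, true_and,
            not_le] at he
          apply f_anti hp0 hp _ (wt_le e)
          rw [wt_xor]; omega
      _ = ∑ e ∈ B \ A, f e := by
          apply Finset.sum_nbij' (i := φ) (j := φ) hmem hmem'
            (fun e _ => hφφ e) (fun e _ => hφφ e)
          intro e _; rfl
  have h1 := Finset.sum_inter_add_sum_sdiff A B f
  have h2 := Finset.sum_inter_add_sum_sdiff B A f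
  rw [Finset.inter_comm] at h2
  linarith

/-- For a vector `E` of `n` independent Bernoulli(p) bits with `0 ≤ p ≤ 1/2`
(so `Pr(E = e) = p^{wt(e)}·(1−p)^{n−wt(e)}`), for every center `m ∈ {0,1}^n` and
radius `t`, the probability of the Hamming ball of radius `t` around `m` is at most
that of the ball around the all-zero string, which equals
`Σ_{i ≤ t} C(n,i)·p^i·(1−p)^{n−i}`. -/
theorem bernoulli_ball_max_at_zero (n : ℕ) (p : ℝ) (hp0 : 0 ≤ p) (hp : p ≤ 1 / 2)
    (m : Fin n → Bool) (t : ℕ) :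
    (∑ e ∈ Finset.univ.filter (fun e : Fin n → Bool => hammingDist e m ≤ t),
        p ^ wt e * (1 - p) ^ (n - wt e))
      ≤ ∑ e ∈ Finset.univ.filter (fun e : Fin n → Bool => wt e ≤ t),
          p ^ wt e * (1 - p) ^ (n - wt e)
    ∧ (∑ e ∈ Finset.univ.filter (fun e : Fin n → Bool => wt e ≤ t),
          p ^ wt e * (1 - p) ^ (n - wt e))
        = ∑ i ∈ Finset.range (t + 1), (n.choose i : ℝ) * p ^ i * (1 - p) ^ (n - i) := by
  exact ⟨part1 n p hp0 hp m t, part2 n p t⟩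
end

section
/- Let M be uniformly distributed over {0,1}^k, let E = (E_1, …, E_k) be independent Bernoulli(p) bits with 0 ≤ p ≤ 1/2, independent of M, and let Z = M ⊕ E (bitwise XOR), modeling transmission of the challenge M over a binary symmetric channel with crossover probability p. Then for every (deterministic) response function g : {0,1}^k → {0,1}^k and every integer threshold t ≥ 0, Pr( d_H(g(Z), M) ≤ t ) ≤ Σ_{i ≤ t} C(k, i)·p^i·(1−p)^{k−i}; in particular the identity response g(z) = z achieves this bound with equality. -/
open Finset
open scoped Classical BigOperators

/-- Probability of an event over a finite sample space with mass function `P`. -/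
noncomputable def pr {Ω : Type*} [Fintype Ω] (P : Ω → ℝ) (E : Ω → Prop) : ℝ :=
  ∑ ω, if E ω then P ω else 0

noncomputable def Bb (p : ℝ) (n t : ℕ) : ℝ :=
  ∑ i ∈ Finset.range (t + 1), (n.choose i : ℝ) * p ^ i * (1 - p) ^ (n - i)

noncomputable def Tb {ι : Type*} [DecidableEq ι] (q : ι → ℝ) (s : Finset ι) (t : ℕ) : ℝ :=
  ∑ F ∈ s.powerset, if F.card ≤ t then ∏ i ∈ s, (if i ∈ F then q i else 1 - q i) else 0

lemma Tb_empty {ι : Type*} [DecidableEq ι] (q : ι → ℝ) (t : ℕ) : Tb q ∅ t = 1 := by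
  simp [Tb, Finset.filter_singleton]

lemma Tb_insert_zero {ι : Type*} [DecidableEq ι] (q : ι → ℝ) {a : ι} {s : Finset ι}
    (ha : a ∉ s) : Tb q (insert a s) 0 = (1 - q a) * Tb q s 0 := by
  rw [Tb, Finset.sum_powerset_insert ha, Tb, Finset.mul_sum]
  have h2 : ∀ F ∈ s.powerset, (if (insert a F).card ≤ 0 then
      ∏ i ∈ insert a s, (if i ∈ insert a F then q i else 1 - q i) else 0) = 0 := by
    intro F _
    rw [if_neg]
    simp [Finset.card_insert_of_notMem]
  rw [Finset.sum_congr rfl h2]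
  simp only [Finset.sum_const, smul_zero, add_zero]
  refine Finset.sum_congr rfl fun F hF => ?_
  have haF : a ∉ F := fun h => ha (Finset.mem_powerset.mp hF h)
  rw [Finset.prod_insert ha, if_neg haF]
  split <;> simp

lemma Tb_insert_succ {ι : Type*} [DecidableEq ι] (q : ι → ℝ) {a : ι} {s : Finset ι}
    (ha : a ∉ s) (t : ℕ) :
    Tb q (insert a s) (t + 1) = (1 - q a) * Tb q s (t + 1) + q a * Tb q s t := by
  rw [Tb, Finset.sum_powerset_insert ha, Tb, Tb, Finset.mul_sum, Finset.mul_sum]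
  congr 1
  · refine Finset.sum_congr rfl fun F hF => ?_
    have haF : a ∉ F := fun h => ha (Finset.mem_powerset.mp hF h)
    rw [Finset.prod_insert ha, if_neg haF]
    split <;> simp
  · refine Finset.sum_congr rfl fun F hF => ?_
    have hFs : F ⊆ s := Finset.mem_powerset.mp hF
    have haF : a ∉ F := fun h => ha (hFs h)
    rw [Finset.card_insert_of_notMem haF, Finset.prod_insert ha,
      if_pos (Finset.mem_insert_self a F)]
    have hprod : ∏ i ∈ s, (if i ∈ insert a F then q i else 1 - q i)
        = ∏ i ∈ s, (if i ∈ F then q i else 1 - q i) := by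
      refine Finset.prod_congr rfl fun i hi => ?_
      have : i ≠ a := fun h => ha (h ▸ hi)
      simp [Finset.mem_insert, this]
    rw [hprod]
    simp only [Nat.add_le_add_iff_right]
    split <;> simp

lemma Tb_nonneg {ι : Type*} [DecidableEq ι] {q : ι → ℝ} {s : Finset ι}
    (hq : ∀ i, 0 ≤ q i ∧ q i ≤ 1) (t : ℕ) : 0 ≤ Tb q s t := by
  refine Finset.sum_nonneg fun F _ => ?_
  split
  · refine Finset.prod_nonneg fun i _ => ?_
    split
    · exact (hq i).1
    · linarith [(hq i).2]
  · exact le_refl 0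

lemma Tb_mono {ι : Type*} [DecidableEq ι] {q : ι → ℝ} {s : Finset ι}
    (hq : ∀ i, 0 ≤ q i ∧ q i ≤ 1) (t : ℕ) : Tb q s t ≤ Tb q s (t + 1) := by
  refine Finset.sum_le_sum fun F _ => ?_
  have hpr : 0 ≤ ∏ i ∈ s, (if i ∈ F then q i else 1 - q i) := by
    refine Finset.prod_nonneg fun i _ => ?_
    split
    · exact (hq i).1
    · linarith [(hq i).2]
  split
  · rw [if_pos (by omega)]
  · split
    · exact hpr
    · exact le_refl 0

lemma Tb_le {ι : Type*} [DecidableEq ι] {p : ℝ} (hp0 : 0 ≤ p) (hp1 : p ≤ 1) {q : ι → ℝ}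
    (hq : ∀ i, p ≤ q i ∧ q i ≤ 1) (s : Finset ι) :
    ∀ t, Tb q s t ≤ Tb (fun _ => p) s t := by
  have hq' : ∀ i, 0 ≤ q i ∧ q i ≤ 1 := fun i => ⟨le_trans hp0 (hq i).1, (hq i).2⟩
  have hp' : ∀ i : ι, 0 ≤ (fun _ : ι => p) i ∧ (fun _ : ι => p) i ≤ 1 := fun _ => ⟨hp0, hp1⟩
  induction s using Finset.induction_on with
  | empty => intro t; rw [Tb_empty, Tb_empty]
  | insert _ _ ha =>
    rename_i a s ih
    intro t
    cases t with
    | zero =>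
      rw [Tb_insert_zero q ha, Tb_insert_zero (fun _ => p) ha]
      have h1 : 1 - q a ≤ 1 - p := by linarith [(hq a).1]
      have h2 : 0 ≤ 1 - q a := by linarith [(hq a).2]
      exact mul_le_mul h1 (ih 0) (Tb_nonneg hq' 0) (by linarith)
    | succ t =>
      rw [Tb_insert_succ q ha, Tb_insert_succ (fun _ => p) ha]
      have hBA : Tb q s t ≤ Tb q s (t + 1) := Tb_mono hq' t
      have hA : Tb q s (t + 1) ≤ Tb (fun _ => p) s (t + 1) := ih (t + 1)
      have hB : Tb q s t ≤ Tb (fun _ => p) s t := ih t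
      have h1 : p ≤ q a := (hq a).1
      have h2 : q a ≤ 1 := (hq a).2
      nlinarith [Tb_nonneg hq' t (s := s), Tb_nonneg hq' (t + 1) (s := s)]

lemma Bb_zero_left (p : ℝ) (t : ℕ) : Bb p 0 t = 1 := by
  rw [Bb, Finset.sum_eq_single 0]
  · simp
  · intro i _ hi
    cases i with
    | zero => exact absurd rfl hi
    | succ n => simp [Nat.choose]
  · simp

lemma Bb_zero_right (p : ℝ) (n : ℕ) : Bb p n 0 = (1 - p) ^ n := by
  simp [Bb]

lemma Bb_succ_succ (p : ℝ) (n t : ℕ) :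
    Bb p (n + 1) (t + 1) = (1 - p) * Bb p n (t + 1) + p * Bb p n t := by
  have key : ∀ k ∈ Finset.range (t + 1),
      (((n + 1).choose (k + 1) : ℝ)) * p ^ (k + 1) * (1 - p) ^ (n + 1 - (k + 1))
        = (1 - p) * ((n.choose (k + 1) : ℝ) * p ^ (k + 1) * (1 - p) ^ (n - (k + 1)))
          + p * ((n.choose k : ℝ) * p ^ k * (1 - p) ^ (n - k)) := by
    intro k _
    rcases le_or_gt (k + 1) n with h | h
    · rw [Nat.choose_succ_succ, show n + 1 - (k + 1) = n - (k + 1) + 1 from by omega,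
        show n - k = n - (k + 1) + 1 from by omega]
      push_cast
      ring
    · rw [Nat.choose_succ_succ, Nat.choose_eq_zero_of_lt h,
        show n + 1 - (k + 1) = n - k from by omega]
      push_cast
      ring
  rw [Bb, Bb, Bb, Finset.sum_range_succ' _ (t + 1), Finset.sum_range_succ' _ (t + 1),
    Finset.sum_congr rfl key, Finset.sum_add_distrib, ← Finset.mul_sum, ← Finset.mul_sum]
  simp only [Nat.choose_zero_right, Nat.sub_zero, Nat.cast_one, pow_zero]
  ring

lemma Tb_const_eq_Bb (p : ℝ) {ι : Type*} [DecidableEq ι] (s : Finset ι) :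
    ∀ t, Tb (fun _ => p) s t = Bb p s.card t := by
  induction s using Finset.induction_on with
  | empty => intro t; rw [Tb_empty, Finset.card_empty, Bb_zero_left]
  | insert _ _ ha =>
    rename_i a s ih
    intro t
    rw [Finset.card_insert_of_notMem ha]
    cases t with
    | zero =>
      rw [Tb_insert_zero _ ha, ih 0, Bb_zero_right, Bb_zero_right, pow_succ, mul_comm]
    | succ t =>
      rw [Tb_insert_succ _ ha, ih (t + 1), ih t, Bb_succ_succ]

lemma wt_prod' (p : ℝ) {k : ℕ} (e : Fin k → Bool) :
    p ^ (hammingDist e (fun _ => false)) * (1 - p) ^ (k - hammingDist e (fun _ => false))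
      = ∏ i, (if e i then p else 1 - p) := by
  classical
  rw [Finset.prod_ite, Finset.prod_const, Finset.prod_const]
  have h1 : (Finset.univ.filter fun i => e i = true).card = hammingDist e (fun _ => false) := by
    unfold hammingDist
    congr 1
    ext i
    simp
  have h2 := Finset.card_filter_add_card_filter_not
    (s := (Finset.univ : Finset (Fin k))) (p := fun i => e i = true)
  rw [h1] at h2
  simp only [Finset.card_univ, Fintype.card_fin] at h2
  have h3 : (Finset.univ.filter fun i => ¬ e i = true).card
      = k - hammingDist e (fun _ => false) := by omega
  rw [h1, h3]

lemma sum_to_Tb (p : ℝ) {k : ℕ} (c : Fin k → Bool) (t : ℕ) :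
    ∑ e : Fin k → Bool, (if hammingDist e c ≤ t then ∏ i, (if e i then p else 1 - p) else 0)
      = Tb (fun i => if c i then 1 - p else p) Finset.univ t := by
  classical
  rw [Tb, Finset.powerset_univ]
  refine Finset.sum_nbij' (i := fun e => Finset.univ.filter fun j => e j ≠ c j)
    (j := fun F => fun j => if j ∈ F then !(c j) else c j) ?_ ?_ ?_ ?_ ?_
  · intro e _; exact Finset.mem_univ _
  · intro F _; exact Finset.mem_univ _
  · intro e _
    funext j
    by_cases h : e j = c j <;> cases hc : c j <;> cases he : e j <;> simp_all
  · intro F _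
    ext j
    by_cases h : j ∈ F <;> cases hc : c j <;> simp_all
  · intro e _
    have hd : hammingDist e c = (Finset.univ.filter fun j => e j ≠ c j).card := rfl
    rw [hd]
    by_cases ht : (Finset.univ.filter fun j => e j ≠ c j).card ≤ t
    · rw [if_pos ht, if_pos ht]
      refine Finset.prod_congr rfl fun i _ => ?_
      by_cases h : e i = c i <;> cases hc : c i <;> cases he : e i <;> simp_all
    · rw [if_neg ht, if_neg ht]

lemma ham1 {k : ℕ} (m e : Fin k → Bool) :
    hammingDist (fun i => xor (m i) (e i)) m = hammingDist e (fun _ => false) := by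
  unfold hammingDist
  congr 1
  ext i
  cases hm : m i <;> cases he : e i <;> simp [hm, he]

lemma ham2 {k : ℕ} (a b e : Fin k → Bool) :
    hammingDist a (fun i => xor (b i) (e i)) = hammingDist e (fun i => xor (a i) (b i)) := by
  unfold hammingDist
  congr 1
  ext i
  cases ha : a i <;> cases hb : b i <;> cases he : e i <;> simp [ha, hb, he]

lemma pull_const {α : Type*} [Fintype α] (a : ℝ) (P : α → Prop) [DecidablePred P] (f : α → ℝ) :
    ∑ x, (if P x then a * f x else 0) = a * ∑ x, (if P x then f x else 0) := by
  classical
  rw [Finset.mul_sum]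
  refine Finset.sum_congr rfl fun x _ => ?_
  split <;> simp

lemma reindex_xor {k : ℕ} (e : Fin k → Bool) (F : (Fin k → Bool) → ℝ) :
    ∑ m, F m = ∑ z : Fin k → Bool, F (fun i => xor (z i) (e i)) := by
  have hinv : Function.Involutive (fun m : Fin k → Bool => fun i => xor (m i) (e i)) := by
    intro m
    funext i
    simp [Bool.xor_assoc]
  exact (Equiv.sum_comp hinv.toPerm F).symm

/-- Soundness core of the challenge-response DBV protocol.  Let `M` be uniform over
`{0,1}^k`, let `E` be `k` independent Bernoulli(p) bits (`0 ≤ p ≤ 1/2`) independent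
of `M`, and `Z = M ⊕ E` (binary symmetric channel with crossover probability `p`).
For every response function `g : {0,1}^k → {0,1}^k` and threshold `t`,
`Pr( d_H(g(Z), M) ≤ t ) ≤ Σ_{i ≤ t} C(k,i)·p^i·(1−p)^{k−i}`, and the identity
response `g(z) = z` achieves this bound with equality. -/
theorem bsc_response_bound (k : ℕ) (p : ℝ) (hp0 : 0 ≤ p) (hp : p ≤ 1 / 2) (t : ℕ)
    (g : (Fin k → Bool) → Fin k → Bool) :
    pr (fun me : (Fin k → Bool) × (Fin k → Bool) =>
          (1 / 2 ^ k : ℝ) * (p ^ wt me.2 * (1 - p) ^ (k - wt me.2)))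
       (fun me => hammingDist (g (fun i => xor (me.1 i) (me.2 i))) me.1 ≤ t)
      ≤ ∑ i ∈ Finset.range (t + 1), (k.choose i : ℝ) * p ^ i * (1 - p) ^ (k - i)
    ∧ pr (fun me : (Fin k → Bool) × (Fin k → Bool) =>
          (1 / 2 ^ k : ℝ) * (p ^ wt me.2 * (1 - p) ^ (k - wt me.2)))
       (fun me => hammingDist (fun i => xor (me.1 i) (me.2 i)) me.1 ≤ t)
      = ∑ i ∈ Finset.range (t + 1), (k.choose i : ℝ) * p ^ i * (1 - p) ^ (k - i) := by
  classical
  have hp1 : p ≤ 1 := by linarith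
  have hRHS : (∑ i ∈ Finset.range (t + 1), (k.choose i : ℝ) * p ^ i * (1 - p) ^ (k - i))
      = Bb p k t := rfl
  have hcard : Fintype.card (Fin k → Bool) = 2 ^ k := by simp
  have harith : ((2 : ℝ) ^ k) * ((1 / 2 ^ k) * Bb p k t) = Bb p k t := by
    field_simp
  have hTbConst : ∀ c : Fin k → Bool,
      ∑ e : Fin k → Bool, (if hammingDist e c ≤ t then
          p ^ wt e * (1 - p) ^ (k - wt e) else 0)
        = Tb (fun i => if c i then 1 - p else p) Finset.univ t := by
    intro c
    simp only [wt, wt_prod']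
    exact sum_to_Tb p c t
  have key : ∀ c : Fin k → Bool,
      ∑ e : Fin k → Bool, (if hammingDist e c ≤ t then
          (1 / 2 ^ k : ℝ) * (p ^ wt e * (1 - p) ^ (k - wt e)) else 0)
        ≤ (1 / 2 ^ k : ℝ) * Bb p k t := by
    intro c
    rw [pull_const, hTbConst c]
    have hq : Tb (fun i => if c i then 1 - p else p) Finset.univ t ≤ Bb p k t := by
      have hle := Tb_le hp0 hp1 (q := fun i => if c i then 1 - p else p)
        (fun i => by split <;> constructor <;> linarith) Finset.univ t
      rwa [Tb_const_eq_Bb, Finset.card_univ, Fintype.card_fin] at hle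
    have hpos : (0 : ℝ) ≤ 1 / 2 ^ k := by positivity
    exact mul_le_mul_of_nonneg_left hq hpos
  have keyEq :
      ∑ e : Fin k → Bool, (if hammingDist e (fun _ => false) ≤ t then
          (1 / 2 ^ k : ℝ) * (p ^ wt e * (1 - p) ^ (k - wt e)) else 0)
        = (1 / 2 ^ k : ℝ) * Bb p k t := by
    rw [pull_const, hTbConst (fun _ => false)]
    have hfun : (fun i : Fin k => if (fun _ : Fin k => false) i then 1 - p else p)
        = fun _ : Fin k => p := by funext i; simp
    rw [hfun, Tb_const_eq_Bb, Finset.card_univ, Fintype.card_fin]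
  constructor
  · -- inequality
    rw [pr, Fintype.sum_prod_type, Finset.sum_comm]
    have h1 : ∀ e : Fin k → Bool,
        (∑ m : Fin k → Bool, if hammingDist (g fun i => xor (m i) (e i)) m ≤ t then
            (1 / 2 ^ k : ℝ) * (p ^ wt e * (1 - p) ^ (k - wt e)) else 0)
          = ∑ z : Fin k → Bool, (if hammingDist e (fun i => xor (g z i) (z i)) ≤ t then
            (1 / 2 ^ k : ℝ) * (p ^ wt e * (1 - p) ^ (k - wt e)) else 0) := by
      intro e
      rw [reindex_xor e (fun m => if hammingDist (g fun i => xor (m i) (e i)) m ≤ t then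
            (1 / 2 ^ k : ℝ) * (p ^ wt e * (1 - p) ^ (k - wt e)) else 0)]
      refine Finset.sum_congr rfl fun z _ => ?_
      simp only
      have harg : (fun i => xor (xor (z i) (e i)) (e i)) = z := by
        funext i; simp [Bool.xor_assoc]
      rw [harg, ham2 (g z) z e]
    simp only
    rw [Finset.sum_congr rfl fun e _ => h1 e, Finset.sum_comm]
    refine le_trans (Finset.sum_le_sum fun z _ => key (fun i => xor (g z i) (z i))) ?_
    rw [Finset.sum_const, Finset.card_univ, hcard, nsmul_eq_mul, hRHS]
    push_cast
    rw [harith]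
  · -- equality
    simp only [pr, ham1]
    rw [Fintype.sum_prod_type, Finset.sum_congr rfl fun m _ => keyEq,
      Finset.sum_const, Finset.card_univ, hcard, nsmul_eq_mul, hRHS]
    push_cast
    rw [harith]
end

section
/- Let O be uniformly distributed over {0,1}^n, let E be a vector of n independent Bernoulli(p) bits with 0 ≤ p ≤ 1/2, independent of O, and let Y = O ⊕ E. Fix a set I ⊆ [n] of indices with |I| = ⌊λ·n⌋ for some 0 ≤ λ < 1, and let O_I denote the substring of O at positions I. Then E_{y, a} [ max_{o ∈ {0,1}^n} Pr( d_H(O, o) ≤ μ·n | Y = y, O_I = a ) ] = Σ_{i ≤ μ·n} C(n − |I|, i)·p^i·(1−p)^{n−|I|−i}, and if moreover μ < (1 − λ)·p this quantity is at most exp( −((1−λ)·p − μ)²·n / (2·(1−λ)·p) ). -/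
open Finset
open scoped Classical BigOperators

/-- Conditional probability `Pr(A | B)`. -/
noncomputable def condPr {Ω : Type*} [Fintype Ω] (P : Ω → ℝ) (A B : Ω → Prop) : ℝ :=
  pr P (fun ω => A ω ∧ B ω) / pr P B

/-- `E_y [ max_{x ∈ {0,1}^n} Pr( d_H(X, x) ≤ t | Y = y ) ]`: the conditional
close-guessing probability with (real) radius `t`. -/
noncomputable def closeGuess {Ω 𝒴 : Type*} [Fintype Ω] [Fintype 𝒴] (P : Ω → ℝ)
    {n : ℕ} (X : Ω → Fin n → Bool) (Y : Ω → 𝒴) (t : ℝ) : ℝ :=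
  ∑ y : 𝒴, pr P (fun ω => Y ω = y) *
    ⨆ x : Fin n → Bool,
      condPr P (fun ω => (hammingDist (X ω) x : ℝ) ≤ t) (fun ω => Y ω = y)

set_option maxHeartbeats 1000000

/-! ### Auxiliary machinery -/
set_option linter.unusedSectionVars false

noncomputable def phi (p : ℝ) (b : Bool) : ℝ := if b = true then p else 1 - p
noncomputable def gval (p : ℝ) (N k : ℕ) : ℝ := p ^ k * (1 - p) ^ (N - k)
noncomputable def cwt {α : Type*} [Fintype α] (g : α → Bool) : ℕ :=
  (univ.filter fun i => g i = true).card

section basic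
variable {p : ℝ}

lemma phi_nonneg (hp0 : 0 ≤ p) (hp : p ≤ 1/2) (b : Bool) : 0 ≤ phi p b := by
  cases b <;> simp [phi] <;> linarith

lemma gval_nonneg (hp0 : 0 ≤ p) (hp : p ≤ 1/2) (N k : ℕ) : 0 ≤ gval p N k := by
  have : (0:ℝ) ≤ 1 - p := by linarith
  unfold gval; positivity

lemma gval_antitone (hp0 : 0 ≤ p) (hp : p ≤ 1/2) (N : ℕ) : Antitone (gval p N) := by
  have h1 : (0:ℝ) ≤ 1 - p := by linarith
  have hp1 : p ≤ 1 := by linarith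
  apply antitone_nat_of_succ_le
  intro k
  unfold gval
  rcases le_or_gt (k+1) N with h | h
  · have : N - k = (N - (k+1)) + 1 := by omega
    rw [this, pow_succ, pow_succ]
    have : p ^ k * p * ((1-p)^(N-(k+1))) ≤ p ^ k * (1-p) * ((1-p)^(N-(k+1))) := by
      apply mul_le_mul_of_nonneg_right _ (by positivity)
      apply mul_le_mul_of_nonneg_left (by linarith) (by positivity)
    calc p ^ k * p * (1 - p) ^ (N - (k + 1))
        ≤ p ^ k * (1-p) * ((1-p)^(N-(k+1))) := this
      _ = p ^ k * ((1 - p) ^ (N - (k+1)) * (1 - p)) := by ring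
  · have e1 : N - (k+1) = 0 := by omega
    have e2 : N - k = 0 := by omega
    simp only [e1, e2, pow_zero, mul_one, pow_succ]
    nlinarith [pow_nonneg hp0 k]

variable {α : Type*} [Fintype α] [DecidableEq α]

lemma cwt_le_card (g : α → Bool) : cwt g ≤ Fintype.card α := by
  classical
  exact (Finset.card_le_card (Finset.filter_subset _ _)).trans (by simp)

lemma hamming_zero_eq_cwt (g : α → Bool) : hammingDist g (fun _ => false) = cwt g := by
  classical
  unfold cwt
  show (univ.filter fun i => g i ≠ false).card = _
  congr 1
  apply Finset.filter_congr
  intro i _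
  cases g i <;> simp

lemma prod_phi_eq (g : α → Bool) :
    ∏ i, phi p (g i) = p ^ cwt g * (1 - p) ^ (Fintype.card α - cwt g) := by
  classical
  rw [← Finset.prod_filter_mul_prod_filter_not univ (fun i => g i = true)]
  have h1 : ∏ x ∈ univ.filter (fun i => g i = true), phi p (g x) = p ^ cwt g := by
    rw [Finset.prod_congr rfl (fun x hx => ?_), Finset.prod_const]
    · rfl
    · simp at hx; simp [phi, hx]
  have h2 : ∏ x ∈ univ.filter (fun i => ¬ g i = true), phi p (g x)
      = (1 - p) ^ (Fintype.card α - cwt g) := by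
    rw [Finset.prod_congr rfl (fun x hx => ?_), Finset.prod_const]
    · congr 1
      have := Finset.card_filter_add_card_filter_not (s := univ)
        (p := fun i => g i = true)
      simp only [Finset.card_univ] at this
      unfold cwt; omega
    · simp at hx; simp [phi, hx]
  rw [h1, h2]

lemma hamming_xor (g z : α → Bool) :
    hammingDist (fun i => xor (g i) (z i)) (fun _ => false) = hammingDist g z := by
  show (univ.filter fun i => xor (g i) (z i) ≠ false).card
    = (univ.filter fun i => g i ≠ z i).card
  congr 1
  apply Finset.filter_congr
  intro i _
  cases (g i) <;> cases (z i) <;> simp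

lemma hamming_xor_shift (g w x : α → Bool) :
    hammingDist (fun k => xor (g k) (w k)) x = hammingDist g (fun k => xor (x k) (w k)) := by
  show (univ.filter fun k => xor (g k) (w k) ≠ x k).card
    = (univ.filter fun k => g k ≠ xor (x k) (w k)).card
  congr 1
  apply Finset.filter_congr
  intro k _
  cases g k <;> cases w k <;> cases x k <;> simp

def xorEquiv {α : Type*} (v : α → Bool) : (α → Bool) ≃ (α → Bool) where
  toFun g := fun i => xor (g i) (v i)
  invFun g := fun i => xor (g i) (v i)
  left_inv g := by funext i; simp [Bool.xor_assoc]
  right_inv g := by funext i; simp [Bool.xor_assoc]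

lemma sum_prod_phi : ∑ g : α → Bool, ∏ i, phi p (g i) = 1 := by
  classical
  rw [← Fintype.piFinset_univ, ← Finset.prod_univ_sum]
  have : ∀ i : α, ∑ b : Bool, phi p b = 1 := by
    intro i
    rw [Fintype.sum_bool]
    simp [phi]
  rw [Finset.prod_congr rfl (fun i _ => this i), Finset.prod_const_one]

lemma sum_W (v : α → Bool) : ∑ g : α → Bool, ∏ k, phi p (xor (g k) (v k)) = 1 := by
  have h := Equiv.sum_comp (xorEquiv v) (fun g : α → Bool => ∏ k, phi p (g k))
  rw [sum_prod_phi] at h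
  exact h

lemma card_cwt_eq (k : ℕ) :
    (univ.filter fun g : α → Bool => cwt g = k).card = (Fintype.card α).choose k := by
  classical
  have hpc := Finset.card_powersetCard k (univ : Finset α)
  rw [Finset.card_univ] at hpc
  rw [← hpc]
  apply Finset.card_bij' (fun g _ => univ.filter fun i => g i = true)
    (fun s _ => fun i => decide (i ∈ s))
  · intro g hg
    funext i
    simp
  · intro s hs
    ext i
    simp
  · intro g hg
    rw [Finset.mem_filter] at hg
    rw [Finset.mem_powersetCard]
    exact ⟨Finset.filter_subset _ _ |>.trans (by simp), hg.2⟩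
  · intro s hs
    rw [Finset.mem_powersetCard] at hs
    rw [Finset.mem_filter]
    refine ⟨Finset.mem_univ _, ?_⟩
    unfold cwt
    rw [← hs.2]
    congr 1
    ext i
    simp

lemma ball_le (hp0 : 0 ≤ p) (hp : p ≤ 1/2) (z : α → Bool) (c : ℕ) (t : ℝ) :
    ∑ g : α → Bool, (if (c : ℝ) + (hammingDist g z : ℝ) ≤ t then ∏ i, phi p (g i) else 0)
    ≤ ∑ g : α → Bool,
        (if (hammingDist g (fun _ => false) : ℝ) ≤ t then ∏ i, phi p (g i) else 0) := by
  classical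
  set N := Fintype.card α with hN
  set G : (α → Bool) → ℝ := fun g => ∏ i, phi p (g i) with hGdef
  have hG : ∀ g : α → Bool, G g = gval p N (cwt g) := fun g => prod_phi_eq g
  have hGnon : ∀ g : α → Bool, 0 ≤ G g := fun g => (hG g) ▸ gval_nonneg hp0 hp _ _
  rw [← Finset.sum_filter, ← Finset.sum_filter]
  set A := univ.filter (fun g : α → Bool => (c : ℝ) + (hammingDist g z : ℝ) ≤ t) with hA
  set B := univ.filter
    (fun g : α → Bool => (hammingDist g (fun _ => false) : ℝ) ≤ t) with hB
  rcases lt_or_ge t 0 with ht | ht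
  · have hAe : A = ∅ := by
      apply Finset.filter_false_of_mem
      intro g _
      push_neg
      have : (0:ℝ) ≤ (c:ℝ) + (hammingDist g z : ℝ) := by positivity
      linarith
    rw [hAe, Finset.sum_empty]
    exact Finset.sum_nonneg (fun g _ => hGnon g)
  · set T := ⌊t⌋₊ with hT
    have memB : ∀ g : α → Bool, g ∈ B ↔ cwt g ≤ T := by
      intro g
      rw [hB, Finset.mem_filter, hamming_zero_eq_cwt]
      simp [hT, Nat.le_floor_iff ht]
    have cardAB : A.card ≤ B.card := by
      apply Finset.card_le_card_of_injOn (fun g => fun i => xor (g i) (z i))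
      · intro g hg
        rw [Finset.mem_coe, hA, Finset.mem_filter] at hg
        rw [Finset.mem_coe, memB]
        rw [← hamming_zero_eq_cwt, hamming_xor g z]
        rw [Nat.le_floor_iff ht]
        have := hg.2
        push_cast at this ⊢
        linarith
      · intro g₁ _ g₂ _ h
        funext i
        have h2 : xor (g₁ i) (z i) = xor (g₂ i) (z i) := congrFun h i
        cases hz : z i <;> rw [hz] at h2 <;> revert h2 <;>
          cases g₁ i <;> cases g₂ i <;> simp
    have hdiffcard : (A \ B).card ≤ (B \ A).card := by
      have h1 : (A \ B).card + (A ∩ B).card = A.card := Finset.card_sdiff_add_card_inter A B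
      have h2 : (B \ A).card + (B ∩ A).card = B.card := Finset.card_sdiff_add_card_inter B A
      rw [Finset.inter_comm] at h2
      omega
    have key : ∑ g ∈ A \ B, G g ≤ ∑ g ∈ B \ A, G g := by
      have hc1 : ∑ g ∈ A \ B, G g ≤ (A \ B).card • gval p N (T + 1) := by
        apply Finset.sum_le_card_nsmul
        intro x hx
        rw [Finset.mem_sdiff] at hx
        have hx2 : ¬ cwt x ≤ T := fun h => hx.2 ((memB x).2 h)
        rw [hG]
        exact gval_antitone hp0 hp N (by omega)
      have hc2 : (B \ A).card • gval p N (T + 1) ≤ ∑ g ∈ B \ A, G g := by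
        apply Finset.card_nsmul_le_sum
        intro x hx
        rw [Finset.mem_sdiff] at hx
        have hx1 : cwt x ≤ T := (memB x).1 hx.1
        rw [hG]
        exact gval_antitone hp0 hp N (by omega)
      calc ∑ g ∈ A \ B, G g ≤ (A \ B).card • gval p N (T + 1) := hc1
        _ ≤ (B \ A).card • gval p N (T + 1) := by
            rw [nsmul_eq_mul, nsmul_eq_mul]
            exact mul_le_mul_of_nonneg_right (Nat.cast_le.2 hdiffcard)
              (gval_nonneg hp0 hp _ _)
        _ ≤ ∑ g ∈ B \ A, G g := hc2
    calc ∑ g ∈ A, G g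
        = ∑ g ∈ A ∩ B, G g + ∑ g ∈ A \ B, G g := (Finset.sum_inter_add_sum_sdiff A B G).symm
      _ ≤ ∑ g ∈ A ∩ B, G g + ∑ g ∈ B \ A, G g := by linarith
      _ = ∑ g ∈ B ∩ A, G g + ∑ g ∈ B \ A, G g := by rw [Finset.inter_comm]
      _ = ∑ g ∈ B, G g := Finset.sum_inter_add_sum_sdiff B A G

lemma sum_ball_eval (t : ℝ) :
    ∑ g : α → Bool,
      (if (hammingDist g (fun _ => false) : ℝ) ≤ t then ∏ i, phi p (g i) else 0)
    = ∑ k ∈ (Finset.range (Fintype.card α + 1)).filter (fun k : ℕ => (k : ℝ) ≤ t),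
        ((Fintype.card α).choose k : ℝ) * p ^ k * (1 - p) ^ (Fintype.card α - k) := by
  classical
  set N := Fintype.card α with hN
  have step1 : ∀ g : α → Bool,
      (if (hammingDist g (fun _ => false) : ℝ) ≤ t then ∏ i, phi p (g i) else 0)
      = (if ((cwt g : ℝ)) ≤ t then gval p N (cwt g) else 0) := by
    intro g
    rw [hamming_zero_eq_cwt, prod_phi_eq]
    rfl
  rw [Finset.sum_congr rfl (fun g _ => step1 g)]
  rw [← Finset.sum_fiberwise_of_maps_to (g := fun g : α → Bool => cwt g)
      (t := Finset.range (N + 1))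
      (fun g _ => Finset.mem_range.2 (Nat.lt_succ_of_le (cwt_le_card g)))]
  rw [Finset.sum_filter]
  apply Finset.sum_congr rfl
  intro k hk
  have : ∀ g ∈ univ.filter (fun g : α → Bool => cwt g = k),
      (if ((cwt g : ℝ)) ≤ t then gval p N (cwt g) else 0)
      = (if ((k : ℝ)) ≤ t then gval p N k else 0) := by
    intro g hg
    rw [Finset.mem_filter] at hg
    rw [hg.2]
  rw [Finset.sum_congr rfl this, Finset.sum_const, card_cwt_eq, nsmul_eq_mul]
  by_cases hkt : (k : ℝ) ≤ t
  · rw [if_pos hkt, if_pos hkt]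
    unfold gval
    ring
  · rw [if_neg hkt, if_neg hkt, mul_zero]

end basic

section split
variable {n : ℕ} (I : Finset (Fin n))

noncomputable def extf (a : ↥I → Bool) (g : ↥(Iᶜ) → Bool) : Fin n → Bool :=
  fun i => if h : i ∈ I then a ⟨i, h⟩ else g ⟨i, Finset.mem_compl.2 h⟩

lemma extf_mem (a : ↥I → Bool) (g : ↥(Iᶜ) → Bool) (i : ↥I) : extf I a g ↑i = a i := by
  unfold extf
  rw [dif_pos i.2]

lemma extf_restrict (a : ↥I → Bool) (g : ↥(Iᶜ) → Bool) :
    (fun i : ↥I => extf I a g ↑i) = a := funext (extf_mem I a g)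

lemma extf_compl (a : ↥I → Bool) (g : ↥(Iᶜ) → Bool) (k : ↥(Iᶜ)) :
    extf I a g ↑k = g k := by
  unfold extf
  rw [dif_neg (Finset.mem_compl.1 k.2)]

noncomputable def splitEquiv : (Fin n → Bool) ≃ (↥I → Bool) × (↥(Iᶜ) → Bool) where
  toFun o := (fun i => o ↑i, fun k => o ↑k)
  invFun ag := extf I ag.1 ag.2
  left_inv o := by
    funext i
    simp only [extf]
    by_cases h : i ∈ I
    · rw [dif_pos h]
    · rw [dif_neg h]
  right_inv ag := by
    refine Prod.ext ?_ ?_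
    · exact extf_restrict I ag.1 ag.2
    · funext k; exact extf_compl I ag.1 ag.2 k

lemma sum_restrict (a : ↥I → Bool) (H : (Fin n → Bool) → ℝ) :
    ∑ o : Fin n → Bool, (if (fun i : ↥I => o ↑i) = a then H o else 0)
    = ∑ g : ↥(Iᶜ) → Bool, H (extf I a g) := by
  classical
  rw [← Equiv.sum_comp (splitEquiv I).symm
    (fun o => if (fun i : ↥I => o ↑i) = a then H o else 0)]
  rw [Fintype.sum_prod_type]
  have inner : ∀ a' : ↥I → Bool, ∀ g : ↥(Iᶜ) → Bool,
      (if (fun i : ↥I => ((splitEquiv I).symm (a', g)) ↑i) = a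
       then H ((splitEquiv I).symm (a', g)) else 0)
      = (if a' = a then H (extf I a' g) else 0) := by
    intro a' g
    have h1 : (splitEquiv I).symm (a', g) = extf I a' g := rfl
    rw [h1, extf_restrict]
  simp only [inner]
  rw [Finset.sum_comm]
  simp [Finset.sum_ite_eq']

lemma card_filter_subtype (s : Finset (Fin n)) (P : Fin n → Prop) [DecidablePred P] :
    (s.filter P).card = (univ.filter fun i : ↥s => P ↑i).card := by
  apply Finset.card_bij'
    (fun (a : Fin n) (ha : a ∈ s.filter P) => (⟨a, (Finset.mem_filter.1 ha).1⟩ : ↥s))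
    (fun (b : ↥s) (_ : b ∈ univ.filter fun i : ↥s => P ↑i) => (↑b : Fin n))
  case hi =>
    intro a ha
    rw [Finset.mem_filter] at ha ⊢
    exact ⟨Finset.mem_univ _, ha.2⟩
  case hj =>
    intro b hb
    rw [Finset.mem_filter] at hb ⊢
    exact ⟨b.2, hb.2⟩
  all_goals intro a _ ; rfl

lemma hamming_split (a : ↥I → Bool) (g : ↥(Iᶜ) → Bool) (x : Fin n → Bool) :
    hammingDist (extf I a g) x
    = (univ.filter fun i : ↥I => ¬ a i = x ↑i).card
      + hammingDist g (fun k : ↥(Iᶜ) => x ↑k) := by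
  show (univ.filter fun i : Fin n => extf I a g i ≠ x i).card = _
  have hu : (univ : Finset (Fin n)) = I ∪ Iᶜ := by
    rw [Finset.union_compl]
  rw [hu, Finset.filter_union, Finset.card_union_of_disjoint
    (Finset.disjoint_filter_filter disjoint_compl_right)]
  congr 1
  · rw [card_filter_subtype I (fun i => extf I a g i ≠ x i)]
    congr 1
    apply Finset.filter_congr
    intro i _
    rw [extf_mem I a g i]
  · rw [card_filter_subtype (Iᶜ) (fun i => extf I a g i ≠ x i)]
    show _ = (univ.filter fun k : ↥(Iᶜ) => g k ≠ x ↑k).card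
    congr 1
    apply Finset.filter_congr
    intro k _
    rw [extf_compl I a g k]

lemma prod_split (f : Fin n → ℝ) :
    ∏ i : Fin n, f i = (∏ i : ↥I, f ↑i) * ∏ k : ↥(Iᶜ), f ↑k := by
  rw [Finset.prod_coe_sort I f, Finset.prod_coe_sort (Iᶜ) f,
    Finset.prod_mul_prod_compl I f]

variable (p : ℝ)

lemma W_factor (v : Fin n → Bool) (a : ↥I → Bool) (g : ↥(Iᶜ) → Bool) :
    ∏ i, phi p (xor (extf I a g i) (v i))
    = (∏ i : ↥I, phi p (xor (a i) (v ↑i))) * ∏ k : ↥(Iᶜ), phi p (xor (g k) (v ↑k)) := by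
  rw [prod_split I (fun i => phi p (xor (extf I a g i) (v i)))]
  congr 1
  · apply Finset.prod_congr rfl
    intro i _
    rw [extf_mem]
  · apply Finset.prod_congr rfl
    intro k _
    rw [extf_compl]

lemma xor_solve : ∀ a b c : Bool, xor a b = c ↔ b = xor a c := by decide

lemma pr_congr {Ω : Type*} [Fintype Ω] (P : Ω → ℝ) {E F : Ω → Prop}
    (h : ∀ ω, E ω ↔ F ω) : pr P E = pr P F := by
  unfold pr
  exact Finset.sum_congr rfl (fun ω _ =>
    @if_congr _ _ _ (Classical.propDecidable _) (Classical.propDecidable _)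
      _ _ _ _ (h ω) rfl rfl)

lemma pr_event (R : (Fin n → Bool) → Prop) (v : Fin n → Bool) (a : ↥I → Bool) :
    pr (fun ω : (Fin n → Bool) × (Fin n → Bool) => (1/2^n : ℝ) * ∏ i, phi p (ω.2 i))
       (fun ω => R ω.1 ∧ ((fun i => xor (ω.1 i) (ω.2 i)), (fun i : ↥I => ω.1 ↑i)) = (v, a))
    = (1/2^n : ℝ) * ∑ g : ↥(Iᶜ) → Bool,
        (if R (extf I a g) then ∏ i, phi p (xor (extf I a g i) (v i)) else 0) := by
  classical
  unfold pr
  rw [Fintype.sum_prod_type]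
  dsimp only
  have inner : ∀ o : Fin n → Bool,
      (∑ e : Fin n → Bool,
        @ite ℝ (R o ∧ ((fun i => xor (o i) (e i)), (fun i : ↥I => o ↑i)) = (v, a))
        (Classical.propDecidable _)
        ((1/2^n : ℝ) * ∏ i, phi p (e i)) 0)
      = (if (fun i : ↥I => o ↑i) = a
         then (if R o then (1/2^n : ℝ) * ∏ i, phi p (xor (o i) (v i)) else 0) else 0) := by
    intro o
    have hcond : ∀ e : Fin n → Bool,
        (R o ∧ ((fun i => xor (o i) (e i)), (fun i : ↥I => o ↑i)) = (v, a))
        ↔ ((R o ∧ (fun i : ↥I => o ↑i) = a) ∧ e = fun i => xor (o i) (v i)) := by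
      intro e
      rw [Prod.mk.injEq]
      constructor
      · rintro ⟨hR, h1, h2⟩
        refine ⟨⟨hR, h2⟩, funext fun i => ?_⟩
        exact (xor_solve (o i) (e i) (v i)).1 (congrFun h1 i)
      · rintro ⟨⟨hR, h2⟩, he⟩
        subst he
        refine ⟨hR, funext fun i => ?_, h2⟩
        exact ((xor_solve (o i) (xor (o i) (v i)) (v i)).2 rfl)
    trans (∑ e : Fin n → Bool,
        if ((R o ∧ (fun i : ↥I => o ↑i) = a) ∧ e = fun i => xor (o i) (v i))
        then (1/2^n : ℝ) * ∏ i, phi p (e i) else 0)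
    · exact Finset.sum_congr rfl (fun e _ =>
        @if_congr ℝ _ _ (Classical.propDecidable _) _ _ _ _ _ (hcond e) rfl rfl)
    by_cases hQ : R o ∧ (fun i : ↥I => o ↑i) = a
    · simp only [hQ, true_and]
      rw [Finset.sum_ite_eq' univ (fun i => xor (o i) (v i))
        (fun e => (1/2^n : ℝ) * ∏ i, phi p (e i))]
      simp [hQ.1, hQ.2]
    · by_cases h2 : (fun i : ↥I => o ↑i) = a
      · have hR : ¬ R o := fun h => hQ ⟨h, h2⟩
        simp [h2, hR]
      · have : ∀ e : Fin n → Bool,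
            ¬ ((R o ∧ (fun i : ↥I => o ↑i) = a) ∧ e = fun i => xor (o i) (v i)) := by
          intro e h
          exact hQ h.1
        simp [this, h2]
  trans (∑ o : Fin n → Bool,
      if (fun i : ↥I => o ↑i) = a
      then (if R o then (1/2^n : ℝ) * ∏ i, phi p (xor (o i) (v i)) else 0) else 0)
  · exact Finset.sum_congr rfl (fun o _ => inner o)
  rw [sum_restrict I a
    (fun o => if R o then (1/2^n : ℝ) * ∏ i, phi p (xor (o i) (v i)) else 0)]
  rw [Finset.mul_sum]
  apply Finset.sum_congr rfl
  intro g _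
  by_cases h : R (extf I a g)
  · rw [if_pos h, if_pos h]
  · rw [if_neg h, if_neg h, mul_zero]

end split


lemma exp_quad (t : ℝ) (ht : 0 ≤ t) : Real.exp (-t) ≤ 1 - t + t^2/2 := by
  have h1 : 1 + t + t^2/2 ≤ Real.exp t := by
    have h := Real.sum_le_exp_of_nonneg ht 3
    have : ∑ i ∈ Finset.range 3, t ^ i / (i.factorial : ℝ) = 1 + t + t^2/2 := by
      simp [Finset.sum_range_succ, Nat.factorial]
    linarith [this ▸ h]
  have h2 : Real.exp (-t) * Real.exp t = 1 := by
    rw [← Real.exp_add]; simp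
  have hq : (0:ℝ) ≤ 1 - t + t^2/2 := by nlinarith [sq_nonneg (t-1)]
  have h3 : (1 - t + t^2/2) * (1 + t + t^2/2) ≤ (1 - t + t^2/2) * Real.exp t :=
    mul_le_mul_of_nonneg_left h1 hq
  nlinarith [Real.exp_pos t, sq_nonneg (t^2)]

lemma chernoff (p : ℝ) (hp0 : 0 < p) (hp : p ≤ 1/2) (N m : ℕ) (hm : m ≤ N) (T : ℝ)
    (hT0 : 0 ≤ T) (hTm : T < m * p) :
    ∑ i ∈ (Finset.range (N+1)).filter (fun i : ℕ => (i:ℝ) ≤ T),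
      ((m.choose i : ℝ)) * p^i * (1-p)^(m-i)
    ≤ Real.exp (-((m:ℝ)*p - T)^2 / (2*((m:ℝ)*p))) := by
  have hq0 : (0:ℝ) ≤ 1 - p := by linarith
  set M := (m:ℝ) * p with hMdef
  have hM : 0 < M := lt_of_le_of_lt hT0 hTm
  set s := (M - T)/M with hs
  have hs0 : 0 < s := div_pos (by linarith) hM
  have hs1 : s ≤ 1 := by rw [hs, div_le_one hM]; linarith
  have hE := Real.exp_pos (-s)
  -- termwise bound and extension
  have step1 : ∑ i ∈ (Finset.range (N+1)).filter (fun i : ℕ => (i:ℝ) ≤ T),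
      ((m.choose i : ℝ)) * p^i * (1-p)^(m-i)
      ≤ ∑ i ∈ Finset.range (N+1),
        Real.exp (s*(T - i)) * (((m.choose i : ℝ)) * p^i * (1-p)^(m-i)) := by
    calc ∑ i ∈ (Finset.range (N+1)).filter (fun i : ℕ => (i:ℝ) ≤ T),
        ((m.choose i : ℝ)) * p^i * (1-p)^(m-i)
        ≤ ∑ i ∈ (Finset.range (N+1)).filter (fun i : ℕ => (i:ℝ) ≤ T),
          Real.exp (s*(T - i)) * (((m.choose i : ℝ)) * p^i * (1-p)^(m-i)) := by
          apply Finset.sum_le_sum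
          intro i hi
          rw [Finset.mem_filter] at hi
          have h1 : (1:ℝ) ≤ Real.exp (s*(T - i)) :=
            Real.one_le_exp (by nlinarith [hi.2])
          nlinarith [pow_nonneg hp0.le i, pow_nonneg hq0 (m - i),
            mul_nonneg (mul_nonneg (Nat.cast_nonneg (m.choose i)) (pow_nonneg hp0.le i)) (pow_nonneg hq0 (m-i))]
      _ ≤ _ := by
          apply Finset.sum_le_sum_of_subset_of_nonneg (Finset.filter_subset _ _)
          intro i _ _
          have := mul_nonneg (mul_nonneg (Nat.cast_nonneg (m.choose i)) (pow_nonneg hp0.le i)) (pow_nonneg hq0 (m-i))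
          positivity
  -- rewrite as mgf
  have step2 : ∑ i ∈ Finset.range (N+1),
      Real.exp (s*(T - i)) * (((m.choose i : ℝ)) * p^i * (1-p)^(m-i))
      = Real.exp (s*T) * ∑ i ∈ Finset.range (N+1),
        (p * Real.exp (-s))^i * (1-p)^(m-i) * (m.choose i : ℝ) := by
    rw [Finset.mul_sum]
    apply Finset.sum_congr rfl
    intro i _
    have he : Real.exp (s*(T - i)) = Real.exp (s*T) * Real.exp (-s) ^ i := by
      rw [← Real.exp_nat_mul, ← Real.exp_add]
      ring_nf
    rw [he, mul_pow]
    ring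
  have step3 : ∑ i ∈ Finset.range (N+1),
      (p * Real.exp (-s))^i * (1-p)^(m-i) * (m.choose i : ℝ)
      = (p * Real.exp (-s) + (1-p))^m := by
    rw [add_pow]
    symm
    apply Finset.sum_subset
    · exact Finset.range_subset_range.2 (by omega)
    · intro i _ hi
      rw [Finset.mem_range, not_lt] at hi
      have : m.choose i = 0 := Nat.choose_eq_zero_of_lt (by omega)
      rw [this]
      simp
  have hbase0 : (0:ℝ) ≤ p * Real.exp (-s) + (1-p) := by positivity
  have step4 : (p * Real.exp (-s) + (1-p))^m ≤ Real.exp (-((m:ℝ)*p*(1 - Real.exp (-s)))) := by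
    have hb : p * Real.exp (-s) + (1-p) ≤ Real.exp (-(p*(1 - Real.exp (-s)))) := by
      have := Real.add_one_le_exp (-(p*(1 - Real.exp (-s))))
      linarith
    calc (p * Real.exp (-s) + (1-p))^m ≤ (Real.exp (-(p*(1 - Real.exp (-s)))))^m :=
          pow_le_pow_left₀ hbase0 hb m
      _ = Real.exp (-((m:ℝ)*p*(1 - Real.exp (-s)))) := by
          rw [← Real.exp_nat_mul]; ring_nf
  have step5 : s*T - M*(1 - Real.exp (-s)) ≤ -(M - T)^2 / (2*M) := by
    have hid : s*T - M*(s - s^2/2) = -(M - T)^2 / (2*M) := by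
      rw [hs]; field_simp; ring
    have hquad := exp_quad s hs0.le
    nlinarith [mul_le_mul_of_nonneg_left hquad hM.le]
  calc ∑ i ∈ (Finset.range (N+1)).filter (fun i : ℕ => (i:ℝ) ≤ T),
      ((m.choose i : ℝ)) * p^i * (1-p)^(m-i)
      ≤ Real.exp (s*T) * ∑ i ∈ Finset.range (N+1),
        (p * Real.exp (-s))^i * (1-p)^(m-i) * (m.choose i : ℝ) := by
        rw [← step2]; exact step1
    _ = Real.exp (s*T) * (p * Real.exp (-s) + (1-p))^m := by rw [step3]
    _ ≤ Real.exp (s*T) * Real.exp (-((m:ℝ)*p*(1 - Real.exp (-s)))) :=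
        mul_le_mul_of_nonneg_left step4 (Real.exp_pos _).le
    _ = Real.exp (s*T - M*(1 - Real.exp (-s))) := by
        rw [← Real.exp_add, hMdef]; ring_nf
    _ ≤ Real.exp (-(M - T)^2 / (2*M)) := Real.exp_le_exp.2 step5


section main
variable {n : ℕ}

lemma part1_s9 (n : ℕ) (p μ : ℝ) (hp0 : 0 ≤ p) (hp : p ≤ 1 / 2)
    (I : Finset (Fin n)) :
    closeGuess
      (fun ω : (Fin n → Bool) × (Fin n → Bool) =>
        (1 / 2 ^ n : ℝ) * (p ^ wt ω.2 * (1 - p) ^ (n - wt ω.2)))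
      (fun ω => ω.1)
      (fun ω => ((fun i => xor (ω.1 i) (ω.2 i)), (fun i : I => ω.1 i)))
      (μ * n)
      = ∑ i ∈ (Finset.range (n + 1)).filter (fun i : ℕ => (i : ℝ) ≤ μ * n),
          ((n - I.card).choose i : ℝ) * p ^ i * (1 - p) ^ (n - I.card - i) := by
  classical
  have hPW : (fun ω : (Fin n → Bool) × (Fin n → Bool) =>
      (1 / 2 ^ n : ℝ) * (p ^ wt ω.2 * (1 - p) ^ (n - wt ω.2)))
      = (fun ω : (Fin n → Bool) × (Fin n → Bool) =>
        (1 / 2 ^ n : ℝ) * ∏ i, phi p (ω.2 i)) := by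
    funext ω
    congr 1
    rw [prod_phi_eq (p := p) ω.2, Fintype.card_fin,
      ← (show wt ω.2 = cwt ω.2 from hamming_zero_eq_cwt ω.2)]
  rw [hPW]
  unfold closeGuess
  dsimp only
  set t := μ * (n : ℝ) with ht
  -- the ball sum
  have hcardJ : Fintype.card ↥(Iᶜ) = n - I.card := by
    rw [Fintype.card_coe, Finset.card_compl, Fintype.card_fin]
  have hSball : (∑ g : ↥(Iᶜ) → Bool,
      (if (hammingDist g (fun _ => false) : ℝ) ≤ t then ∏ k, phi p (g k) else 0))
      = ∑ i ∈ (Finset.range (n + 1)).filter (fun i : ℕ => (i : ℝ) ≤ t),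
          ((n - I.card).choose i : ℝ) * p ^ i * (1 - p) ^ (n - I.card - i) := by
    rw [sum_ball_eval t, hcardJ]
    apply Finset.sum_subset
    · apply Finset.filter_subset_filter
      apply Finset.range_subset_range.2
      omega
    · intro i hi hni
      rw [Finset.mem_filter] at hi hni
      have : ¬ i < n - I.card + 1 := by
        intro hlt
        exact hni ⟨Finset.mem_range.2 hlt, hi.2⟩
      have hgt : n - I.card < i := by omega
      rw [Nat.choose_eq_zero_of_lt hgt]
      simp
  have key : ∀ y : (Fin n → Bool) × (↥I → Bool),
      pr (fun ω : (Fin n → Bool) × (Fin n → Bool) =>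
          (1 / 2 ^ n : ℝ) * ∏ i, phi p (ω.2 i))
        (fun ω => ((fun i => xor (ω.1 i) (ω.2 i)), (fun i : ↥I => ω.1 ↑i)) = y)
      * (⨆ x : Fin n → Bool,
          condPr (fun ω : (Fin n → Bool) × (Fin n → Bool) =>
              (1 / 2 ^ n : ℝ) * ∏ i, phi p (ω.2 i))
            (fun ω => (hammingDist ω.1 x : ℝ) ≤ t)
            (fun ω => ((fun i => xor (ω.1 i) (ω.2 i)), (fun i : ↥I => ω.1 ↑i)) = y))
      = pr (fun ω : (Fin n → Bool) × (Fin n → Bool) =>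
          (1 / 2 ^ n : ℝ) * ∏ i, phi p (ω.2 i))
        (fun ω => ((fun i => xor (ω.1 i) (ω.2 i)), (fun i : ↥I => ω.1 ↑i)) = y)
      * (∑ g : ↥(Iᶜ) → Bool,
          (if (hammingDist g (fun _ => false) : ℝ) ≤ t then ∏ k, phi p (g k) else 0)) := by
    rintro ⟨v, a⟩
    set cy := ∏ i : ↥I, phi p (xor (a i) (v ↑i)) with hcy
    have hcy0 : (0:ℝ) ≤ cy := Finset.prod_nonneg (fun i _ => phi_nonneg hp0 hp _)
    -- denominator
    have hD : pr (fun ω : (Fin n → Bool) × (Fin n → Bool) =>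
          (1 / 2 ^ n : ℝ) * ∏ i, phi p (ω.2 i))
        (fun ω => ((fun i => xor (ω.1 i) (ω.2 i)), (fun i : ↥I => ω.1 ↑i)) = (v, a))
        = (1 / 2 ^ n : ℝ) * cy := by
      have hstep := pr_congr
        (P := fun ω : (Fin n → Bool) × (Fin n → Bool) =>
          (1 / 2 ^ n : ℝ) * ∏ i, phi p (ω.2 i))
        (E := fun ω : (Fin n → Bool) × (Fin n → Bool) =>
          ((fun i => xor (ω.1 i) (ω.2 i)), (fun i : ↥I => ω.1 ↑i)) = (v, a))
        (F := fun ω : (Fin n → Bool) × (Fin n → Bool) =>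
          (fun _ : Fin n → Bool => True) ω.1
            ∧ ((fun i => xor (ω.1 i) (ω.2 i)), (fun i : ↥I => ω.1 ↑i)) = (v, a))
        (fun ω => (and_iff_right trivial).symm)
      rw [hstep, pr_event I p (fun _ => True) v a]
      have hW : ∀ g : ↥(Iᶜ) → Bool,
          (@ite ℝ ((fun _ : Fin n → Bool => True) (extf I a g)) (Classical.propDecidable _)
            (∏ i, phi p (xor (extf I a g i) (v i))) 0)
          = cy * ∏ k : ↥(Iᶜ), phi p (xor (g k) (v ↑k)) := fun g => by
        rw [if_pos trivial, W_factor]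
      trans ((1 / 2 ^ n : ℝ) * (cy * ∑ g : ↥(Iᶜ) → Bool, ∏ k : ↥(Iᶜ), phi p (xor (g k) (v ↑k))))
      · congr 1
        trans (∑ g : ↥(Iᶜ) → Bool, cy * ∏ k : ↥(Iᶜ), phi p (xor (g k) (v ↑k)))
        · exact Finset.sum_congr rfl (fun g _ => hW g)
        · exact (Finset.mul_sum _ _ _).symm
      · have h1 : (∑ g : ↥(Iᶜ) → Bool, ∏ k : ↥(Iᶜ), phi p (xor (g k) (v ↑k))) = 1 :=
          sum_W (fun k : ↥(Iᶜ) => v ↑k)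
        rw [h1, mul_one]
    -- numerator
    have hN : ∀ x : Fin n → Bool,
        pr (fun ω : (Fin n → Bool) × (Fin n → Bool) =>
            (1 / 2 ^ n : ℝ) * ∏ i, phi p (ω.2 i))
          (fun ω => ((hammingDist ω.1 x : ℝ) ≤ t)
            ∧ ((fun i => xor (ω.1 i) (ω.2 i)), (fun i : ↥I => ω.1 ↑i)) = (v, a))
        = ((1 / 2 ^ n : ℝ) * cy) * ∑ h : ↥(Iᶜ) → Bool,
            (if ((univ.filter fun i : ↥I => ¬ a i = x ↑i).card : ℝ)
                + (hammingDist h (fun k : ↥(Iᶜ) => xor (x ↑k) (v ↑k)) : ℝ) ≤ t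
             then ∏ k, phi p (h k) else 0) := by
      intro x
      rw [pr_event I p (fun o => (hammingDist o x : ℝ) ≤ t) v a]
      rw [mul_assoc]
      congr 1
      calc ∑ g : ↥(Iᶜ) → Bool,
          (if (hammingDist (extf I a g) x : ℝ) ≤ t
           then ∏ i, phi p (xor (extf I a g i) (v i)) else 0)
          = ∑ g : ↥(Iᶜ) → Bool,
            (if ((univ.filter fun i : ↥I => ¬ a i = x ↑i).card : ℝ)
                + (hammingDist g (fun k : ↥(Iᶜ) => x ↑k) : ℝ) ≤ t
             then cy * ∏ k : ↥(Iᶜ), phi p (xor (g k) (v ↑k)) else 0) := by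
            apply Finset.sum_congr rfl
            intro g _
            rw [W_factor]
            apply if_congr _ rfl rfl
            rw [hamming_split I a g x, Nat.cast_add]
        _ = ∑ h : ↥(Iᶜ) → Bool,
            (if ((univ.filter fun i : ↥I => ¬ a i = x ↑i).card : ℝ)
                + (hammingDist h (fun k : ↥(Iᶜ) => xor (x ↑k) (v ↑k)) : ℝ) ≤ t
             then cy * ∏ k : ↥(Iᶜ), phi p (h k) else 0) := by
            apply Fintype.sum_equiv (xorEquiv (fun k : ↥(Iᶜ) => v ↑k))
            intro g
            simp only [xorEquiv, Equiv.coe_fn_mk]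
            have hd : hammingDist (fun i : ↥(Iᶜ) => xor (g i) (v ↑i))
                (fun k : ↥(Iᶜ) => xor (x ↑k) (v ↑k))
                = hammingDist g (fun k : ↥(Iᶜ) => x ↑k) := by
              rw [hamming_xor_shift]
              congr 1
              funext k
              simp [Bool.xor_assoc]
            exact if_congr (by rw [hd]) rfl rfl
        _ = ∑ h : ↥(Iᶜ) → Bool, cy *
            (if ((univ.filter fun i : ↥I => ¬ a i = x ↑i).card : ℝ)
                + (hammingDist h (fun k : ↥(Iᶜ) => xor (x ↑k) (v ↑k)) : ℝ) ≤ t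
             then ∏ k : ↥(Iᶜ), phi p (h k) else 0) := by
            apply Finset.sum_congr rfl
            intro h _
            by_cases hc : ((univ.filter fun i : ↥I => ¬ a i = x ↑i).card : ℝ)
                + (hammingDist h (fun k : ↥(Iᶜ) => xor (x ↑k) (v ↑k)) : ℝ) ≤ t
            · rw [if_pos hc, if_pos hc]
            · rw [if_neg hc, if_neg hc, mul_zero]
        _ = cy * ∑ h : ↥(Iᶜ) → Bool,
            (if ((univ.filter fun i : ↥I => ¬ a i = x ↑i).card : ℝ)
                + (hammingDist h (fun k : ↥(Iᶜ) => xor (x ↑k) (v ↑k)) : ℝ) ≤ t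
             then ∏ k, phi p (h k) else 0) := (Finset.mul_sum _ _ _).symm
    by_cases hcyz : cy = 0
    · rw [hD, hcyz, mul_zero, zero_mul, zero_mul]
    · have hcpos : (0:ℝ) < cy := lt_of_le_of_ne hcy0 (Ne.symm hcyz)
      have hDpos : (0:ℝ) < (1 / 2 ^ n : ℝ) * cy := by positivity
      refine congrArg₂ _ rfl ?_
      -- the sup equals the ball sum
      have hcond : ∀ x : Fin n → Bool,
          condPr (fun ω : (Fin n → Bool) × (Fin n → Bool) =>
              (1 / 2 ^ n : ℝ) * ∏ i, phi p (ω.2 i))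
            (fun ω => (hammingDist ω.1 x : ℝ) ≤ t)
            (fun ω => ((fun i => xor (ω.1 i) (ω.2 i)), (fun i : ↥I => ω.1 ↑i)) = (v, a))
          = ∑ h : ↥(Iᶜ) → Bool,
            (if ((univ.filter fun i : ↥I => ¬ a i = x ↑i).card : ℝ)
                + (hammingDist h (fun k : ↥(Iᶜ) => xor (x ↑k) (v ↑k)) : ℝ) ≤ t
             then ∏ k, phi p (h k) else 0) := by
        intro x
        unfold condPr
        rw [hN x, hD]
        exact mul_div_cancel_left₀ _ (ne_of_gt hDpos)
      apply le_antisymm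
      · apply ciSup_le
        intro x
        rw [hcond x]
        exact ball_le hp0 hp (fun k : ↥(Iᶜ) => xor (x ↑k) (v ↑k))
          ((univ.filter fun i : ↥I => ¬ a i = x ↑i).card) t
      · have hx0 : condPr (fun ω : (Fin n → Bool) × (Fin n → Bool) =>
              (1 / 2 ^ n : ℝ) * ∏ i, phi p (ω.2 i))
            (fun ω => (hammingDist ω.1 (extf I a (fun k => v ↑k)) : ℝ) ≤ t)
            (fun ω => ((fun i => xor (ω.1 i) (ω.2 i)), (fun i : ↥I => ω.1 ↑i)) = (v, a))
            = ∑ g : ↥(Iᶜ) → Bool,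
              (if (hammingDist g (fun _ => false) : ℝ) ≤ t then ∏ k, phi p (g k) else 0) := by
          rw [hcond (extf I a (fun k => v ↑k))]
          have h1 : (univ.filter fun i : ↥I => ¬ a i = (extf I a fun k => v ↑k) ↑i) = ∅ := by
            apply Finset.filter_false_of_mem
            intro i _
            rw [extf_mem]
            simp
          have h2 : (fun k : ↥(Iᶜ) => xor ((extf I a fun k => v ↑k) ↑k) (v ↑k))
              = (fun _ : ↥(Iᶜ) => false) := by
            funext k
            rw [extf_compl]
            exact Bool.xor_self _
          rw [h1, h2]
          simp
        calc (∑ g : ↥(Iᶜ) → Bool,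
            (if (hammingDist g (fun _ => false) : ℝ) ≤ t then ∏ k, phi p (g k) else 0))
            = _ := hx0.symm
          _ ≤ _ := le_ciSup (f := fun x : Fin n → Bool =>
              condPr (fun ω : (Fin n → Bool) × (Fin n → Bool) =>
                  (1 / 2 ^ n : ℝ) * ∏ i, phi p (ω.2 i))
                (fun ω => (hammingDist ω.1 x : ℝ) ≤ t)
                (fun ω => ((fun i => xor (ω.1 i) (ω.2 i)), (fun i : ↥I => ω.1 ↑i)) = (v, a)))
              (Set.Finite.bddAbove (Set.finite_range _)) (extf I a (fun k => v ↑k))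
  -- assemble
  have htot : ∑ y : (Fin n → Bool) × (↥I → Bool),
      pr (fun ω : (Fin n → Bool) × (Fin n → Bool) =>
          (1 / 2 ^ n : ℝ) * ∏ i, phi p (ω.2 i))
        (fun ω => ((fun i => xor (ω.1 i) (ω.2 i)), (fun i : ↥I => ω.1 ↑i)) = y) = 1 := by
    unfold pr
    rw [Finset.sum_comm]
    have hin : ∀ ω : (Fin n → Bool) × (Fin n → Bool),
        (∑ y : (Fin n → Bool) × (↥I → Bool),
          @ite ℝ (((fun i => xor (ω.1 i) (ω.2 i)), (fun i : ↥I => ω.1 ↑i)) = y)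
          (Classical.propDecidable _)
          ((1 / 2 ^ n : ℝ) * ∏ i, phi p (ω.2 i)) 0)
        = (1 / 2 ^ n : ℝ) * ∏ i, phi p (ω.2 i) := by
      intro ω
      simp
    trans (∑ ω : (Fin n → Bool) × (Fin n → Bool), (1 / 2 ^ n : ℝ) * ∏ i, phi p (ω.2 i))
    · exact Finset.sum_congr rfl (fun ω _ => hin ω)
    rw [Fintype.sum_prod_type]
    trans (∑ _o : Fin n → Bool, (1 / 2 ^ n : ℝ))
    · apply Finset.sum_congr rfl
      intro o _
      rw [← Finset.mul_sum, sum_prod_phi, mul_one]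
    rw [Finset.sum_const, Finset.card_univ, nsmul_eq_mul]
    have hc : (Fintype.card (Fin n → Bool) : ℝ) = 2 ^ n := by
      rw [Fintype.card_fun, Fintype.card_bool, Fintype.card_fin]
      push_cast
      ring
    rw [hc, mul_one_div, div_self (by positivity)]
  calc ∑ y : (Fin n → Bool) × (↥I → Bool),
      pr (fun ω : (Fin n → Bool) × (Fin n → Bool) =>
          (1 / 2 ^ n : ℝ) * ∏ i, phi p (ω.2 i))
        (fun ω => ((fun i => xor (ω.1 i) (ω.2 i)), (fun i : ↥I => ω.1 ↑i)) = y)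
      * (⨆ x : Fin n → Bool,
          condPr (fun ω : (Fin n → Bool) × (Fin n → Bool) =>
              (1 / 2 ^ n : ℝ) * ∏ i, phi p (ω.2 i))
            (fun ω => (hammingDist ω.1 x : ℝ) ≤ t)
            (fun ω => ((fun i => xor (ω.1 i) (ω.2 i)), (fun i : ↥I => ω.1 ↑i)) = y))
      = ∑ y : (Fin n → Bool) × (↥I → Bool),
        pr (fun ω : (Fin n → Bool) × (Fin n → Bool) =>
            (1 / 2 ^ n : ℝ) * ∏ i, phi p (ω.2 i))
          (fun ω => ((fun i => xor (ω.1 i) (ω.2 i)), (fun i : ↥I => ω.1 ↑i)) = y)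
        * (∑ g : ↥(Iᶜ) → Bool,
            (if (hammingDist g (fun _ => false) : ℝ) ≤ t then ∏ k, phi p (g k) else 0)) :=
        Finset.sum_congr rfl (fun y _ => key y)
    _ = _ := by
        rw [← Finset.sum_mul, htot, one_mul]
        exact hSball

end main

/-- Sampling intruder in the bounded retrieval model.  Let `O` be uniform over
`{0,1}^n`, `E` a vector of `n` independent Bernoulli(p) bits (`0 ≤ p ≤ 1/2`)
independent of `O`, and `Y = O ⊕ E`.  Fix `I ⊆ [n]` with `|I| = ⌊λ·n⌋`
(`0 ≤ λ < 1`) and let `O_I` be the substring of `O` at positions `I`.  Then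
`E_{y,a}[ max_o Pr( d_H(O,o) ≤ μ·n | Y = y, O_I = a ) ]
  = Σ_{i ≤ μ·n} C(n−|I|, i)·p^i·(1−p)^{n−|I|−i}`,
and if moreover `μ < (1−λ)·p` this quantity is at most
`exp( −((1−λ)·p − μ)²·n / (2·(1−λ)·p) )`. -/
theorem uniform_bsc_sampled_leak_close_guess (n : ℕ) (p lam μ : ℝ)
    (hp0 : 0 ≤ p) (hp : p ≤ 1 / 2) (hlam0 : 0 ≤ lam) (hlam1 : lam < 1)
    (hμ0 : 0 ≤ μ)
    (I : Finset (Fin n)) (hI : I.card = ⌊lam * n⌋₊) :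
    closeGuess
      (fun ω : (Fin n → Bool) × (Fin n → Bool) =>
        (1 / 2 ^ n : ℝ) * (p ^ wt ω.2 * (1 - p) ^ (n - wt ω.2)))
      (fun ω => ω.1)
      (fun ω => ((fun i => xor (ω.1 i) (ω.2 i)), (fun i : I => ω.1 i)))
      (μ * n)
      = (∑ i ∈ (Finset.range (n + 1)).filter (fun i : ℕ => (i : ℝ) ≤ μ * n),
          ((n - I.card).choose i : ℝ) * p ^ i * (1 - p) ^ (n - I.card - i))
    ∧ (μ < (1 - lam) * p →
        closeGuess
          (fun ω : (Fin n → Bool) × (Fin n → Bool) =>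
            (1 / 2 ^ n : ℝ) * (p ^ wt ω.2 * (1 - p) ^ (n - wt ω.2)))
          (fun ω => ω.1)
          (fun ω => ((fun i => xor (ω.1 i) (ω.2 i)), (fun i : I => ω.1 i)))
          (μ * n)
        ≤ Real.exp (-((1 - lam) * p - μ) ^ 2 * n / (2 * (1 - lam) * p))) := by
  have h1 := part1_s9 n p μ hp0 hp I
  refine ⟨h1, ?_⟩
  intro hμ
  rw [h1]
  have hlp : 0 < 1 - lam := by linarith
  have hppos : 0 < p := by nlinarith
  by_cases hn : n = 0
  · subst hn
    have hI0 : I = ∅ := Finset.eq_empty_of_forall_notMem (fun x => (Fin.elim0 x))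
    subst hI0
    norm_num [Finset.sum_filter, Finset.sum_range_succ]
  · have hn' : 0 < n := Nat.pos_of_ne_zero hn
    have hnR : (0:ℝ) < n := by exact_mod_cast hn'
    set m := n - I.card with hm
    have hmn : m ≤ n := Nat.sub_le _ _
    have hcard_le : I.card ≤ n := by
      have := Finset.card_le_univ I
      simpa using this
    have hmcast : (m:ℝ) = (n:ℝ) - I.card := by
      rw [hm, Nat.cast_sub hcard_le]
    have hIcard : (I.card : ℝ) ≤ lam * n := by
      rw [hI]
      exact Nat.floor_le (by positivity)
    have hmlow : (1-lam) * n ≤ (m:ℝ) := by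
      rw [hmcast]; nlinarith
    have hT0 : (0:ℝ) ≤ μ * n := by positivity
    have hA1 : μ * n < ((1-lam)*p) * n := by
      apply mul_lt_mul_of_pos_right hμ hnR
    have hA2 : ((1-lam)*p)*n ≤ (m:ℝ)*p := by nlinarith
    have hTm : μ * n < (m:ℝ) * p := lt_of_lt_of_le hA1 hA2
    have hcher := chernoff p hppos hp n m hmn (μ*n) hT0 hTm
    refine le_trans hcher (Real.exp_le_exp.2 ?_)
    set M := (m:ℝ)*p with hM
    set A := ((1-lam)*p)*((n:ℕ):ℝ) with hA
    have hApos : (0:ℝ) < A := by rw [hA]; positivity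
    have hMpos : (0:ℝ) < M := lt_of_le_of_lt hT0 hTm
    have hkey : (A - μ*n)^2 / (2*A) ≤ (M - μ*n)^2/(2*M) := by
      rw [div_le_div_iff₀ (by positivity) (by positivity)]
      have hfac : (0:ℝ) ≤ (M - A) * (A*M - (μ*n)^2) := by
        apply mul_nonneg (by linarith)
        nlinarith
      nlinarith
    have hrw : -((1 - lam) * p - μ)^2 * (n:ℝ) / (2 * (1 - lam) * p)
        = -((A - μ*n)^2/(2*A)) := by
      rw [hA]
      field_simp
    rw [hrw]
    calc -(M - μ*n)^2 / (2*M) = -((M - μ*n)^2/(2*M)) := by rw [neg_div]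
      _ ≤ -((A - μ*n)^2/(2*A)) := neg_le_neg hkey
end

section
/- Let 0 < p_i < β < p_b ≤ 1 and 0 < ε_FR, ε_FA ≤ 1. If the integer k satisfies k ≥ max{ (p_i + β)·ln(1/ε_FR) / (β − p_i)² , 2·p_b·ln(1/ε_FA) / (p_b − β)² }, then Σ_{i > β·k} C(k, i)·p_i^i·(1−p_i)^{k−i} ≤ ε_FR and Σ_{i ≤ β·k} C(k, i)·p_b^i·(1−p_b)^{k−i} ≤ ε_FA. (In the DBV setting: with bit-error probability p_i at the intended receiver and p_b at the blocked receiver, a k-bit uniform challenge is received with more than β·k errors at the intended receiver with probability at most ε_FR, and with at most β·k errors at the blocked receiver with probability at most ε_FA; this is the quantitative content of the (ψ, ε_FA, ε_FR)-DFA-security of the (E_0, k, β)-challenge-response protocol.) -/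
open Finset
open scoped Classical BigOperators

/-- `log x ≥ 2(x-1)/(x+1)` for `x ≥ 1`. -/
lemma aux_log_lb {x : ℝ} (hx : 1 ≤ x) : 2 * (x - 1) / (x + 1) ≤ Real.log x := by
  have hx0 : (0:ℝ) < x := lt_of_lt_of_le one_pos hx
  set g : ℝ → ℝ := fun y => Real.log y + 4 * (y + 1)⁻¹ with hg
  have hder : ∀ y : ℝ, 1 ≤ y → HasDerivAt g (y⁻¹ + 4 * (-1 / (y + 1) ^ 2)) y := by
    intro y hy
    have hy0 : (0:ℝ) < y := lt_of_lt_of_le one_pos hy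
    have h1 : HasDerivAt Real.log y⁻¹ y := Real.hasDerivAt_log (ne_of_gt hy0)
    have h2 : HasDerivAt (fun z : ℝ => z + 1) 1 y := (hasDerivAt_id y).add_const 1
    have h3 : HasDerivAt (fun z : ℝ => (z + 1)⁻¹) (-1 / (y + 1) ^ 2) y :=
      h2.inv (by positivity)
    exact h1.add (h3.const_mul 4)
  have hmono : MonotoneOn g (Set.Ici 1) := by
    apply monotoneOn_of_deriv_nonneg (convex_Ici 1)
    · intro y hy
      exact ((hder y hy).continuousAt).continuousWithinAt
    · intro y hy
      rw [interior_Ici] at hy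
      exact ((hder y (le_of_lt hy)).differentiableAt).differentiableWithinAt
    · intro y hy
      rw [interior_Ici] at hy
      rw [(hder y (le_of_lt hy)).deriv]
      have hy0 : (0:ℝ) < y := lt_trans one_pos hy
      have heq : y⁻¹ + 4 * (-1 / (y + 1) ^ 2) = ((y+1)^2 - 4*y) / (y * (y+1)^2) := by
        field_simp
        ring
      rw [heq]
      apply div_nonneg (by nlinarith [sq_nonneg (y-1)]) (by positivity)
  have h1m : (1:ℝ) ∈ Set.Ici (1:ℝ) := Set.mem_Ici.2 le_rfl
  have hxm : x ∈ Set.Ici (1:ℝ) := Set.mem_Ici.2 hx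
  have hmx := hmono h1m hxm hx
  have hg1 : g 1 = 2 := by norm_num [hg]
  rw [hg1] at hmx
  have hmx' : 2 ≤ Real.log x + 4 * (x+1)⁻¹ := hmx
  have hx1 : (0:ℝ) < x + 1 := by linarith
  have h5 : 4 * (x+1)⁻¹ * (x+1) = 4 := by field_simp
  have h6 := mul_le_mul_of_nonneg_right hmx' (le_of_lt hx1)
  rw [div_le_iff₀ hx1]
  nlinarith [h6, h5]

/-- `1 - x + x log x ≥ (1-x)²/2` for `0 < x ≤ 1`. -/
lemma aux_entropy_lb {x : ℝ} (hx0 : 0 < x) (hx1 : x ≤ 1) :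
    (1 - x) ^ 2 / 2 ≤ 1 - x + x * Real.log x := by
  set h : ℝ → ℝ := fun y => 1 - y + y * Real.log y - (1 - y) ^ 2 / 2 with hh
  have hder : ∀ y : ℝ, 0 < y →
      HasDerivAt h (-1 + (1 * Real.log y + y * y⁻¹) - (2 * (1-y)^1 * (-1)) / 2) y := by
    intro y hy
    have h1 : HasDerivAt (fun z : ℝ => 1 - z) (-1) y := by
      simpa using ((hasDerivAt_id y).const_sub 1)
    have h2 : HasDerivAt (fun z : ℝ => z * Real.log z) (1 * Real.log y + y * y⁻¹) y :=
      (hasDerivAt_id y).mul (Real.hasDerivAt_log (ne_of_gt hy))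
    have h3 : HasDerivAt (fun z : ℝ => (1 - z) ^ 2) (2 * (1-y)^1 * (-1)) y := by
      simpa using h1.fun_pow 2
    exact (h1.add h2).sub (h3.div_const 2)
  have hanti : AntitoneOn h (Set.Icc x 1) := by
    apply antitoneOn_of_deriv_nonpos (convex_Icc x 1)
    · intro y hy
      have hy0 : 0 < y := lt_of_lt_of_le hx0 hy.1
      exact ((hder y hy0).continuousAt).continuousWithinAt
    · intro y hy
      rw [interior_Icc] at hy
      have hy0 : 0 < y := lt_trans hx0 hy.1
      exact ((hder y hy0).differentiableAt).differentiableWithinAt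
    · intro y hy
      rw [interior_Icc] at hy
      have hy0 : 0 < y := lt_trans hx0 hy.1
      rw [(hder y hy0).deriv]
      have hlog : Real.log y ≤ y - 1 := Real.log_le_sub_one_of_pos hy0
      have hyy : y * y⁻¹ = 1 := mul_inv_cancel₀ (ne_of_gt hy0)
      rw [hyy]
      nlinarith [hy.2]
  have hxm : x ∈ Set.Icc x 1 := Set.mem_Icc.2 ⟨le_rfl, hx1⟩
  have h1m : (1:ℝ) ∈ Set.Icc x 1 := Set.mem_Icc.2 ⟨hx1, le_rfl⟩
  have hax := hanti hxm h1m hx1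
  have h1v : h 1 = 0 := by norm_num [hh]
  rw [h1v] at hax
  have : (0:ℝ) ≤ 1 - x + x * Real.log x - (1 - x) ^ 2 / 2 := hax
  linarith

/-- Generic Chernoff-type bound on a filtered binomial sum. -/
lemma chernoff_sum (p t c : ℝ) (hp0 : 0 ≤ p) (hp1 : p ≤ 1) (k : ℕ)
    (P : ℕ → Prop)
    (hP : ∀ i : ℕ, P i → 0 ≤ t * i - c) :
    (∑ i ∈ (Finset.range (k + 1)).filter (fun i : ℕ => P i),
        (k.choose i : ℝ) * p ^ i * (1 - p) ^ (k - i))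
      ≤ Real.exp (-c) * (p * Real.exp t + (1 - p)) ^ k := by
  have hq : (0:ℝ) ≤ 1 - p := by linarith
  have term_nonneg : ∀ i : ℕ, 0 ≤ (k.choose i : ℝ) * p ^ i * (1 - p) ^ (k - i) := by
    intro i; positivity
  calc (∑ i ∈ (Finset.range (k + 1)).filter (fun i : ℕ => P i),
        (k.choose i : ℝ) * p ^ i * (1 - p) ^ (k - i))
      ≤ ∑ i ∈ (Finset.range (k + 1)).filter (fun i : ℕ => P i),
        ((k.choose i : ℝ) * p ^ i * (1 - p) ^ (k - i)) * Real.exp (t * i - c) := by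
        apply Finset.sum_le_sum
        intro i hi
        have hPi : P i := (Finset.mem_filter.1 hi).2
        have h1 : (1:ℝ) ≤ Real.exp (t * i - c) := by
          rw [← Real.exp_zero]
          exact Real.exp_le_exp.2 (hP i hPi)
        nlinarith [term_nonneg i]
    _ ≤ ∑ i ∈ Finset.range (k + 1),
        ((k.choose i : ℝ) * p ^ i * (1 - p) ^ (k - i)) * Real.exp (t * i - c) := by
        apply Finset.sum_le_sum_of_subset_of_nonneg (Finset.filter_subset _ _)
        intro i _ _
        have := term_nonneg i
        positivity
    _ = Real.exp (-c) * (p * Real.exp t + (1 - p)) ^ k := by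
        rw [add_pow, Finset.mul_sum]
        apply Finset.sum_congr rfl
        intro i _
        rw [mul_pow, ← Real.exp_nat_mul]
        rw [show t * (i:ℝ) - c = (i:ℝ) * t + (-c) by ring, Real.exp_add]
        ring

set_option maxHeartbeats 1000000 in
/-- Quantitative content of `(ψ, ε_FA, ε_FR)`-DFA-security of the `(E₀, k, β)`
challenge-response protocol: with bit-error probability `p_i` at the intended
receiver and `p_b` at the blocked receiver, `0 < p_i < β < p_b ≤ 1`, and challenge
length `k ≥ max{ (p_i+β)·ln(1/ε_FR)/(β−p_i)² , 2·p_b·ln(1/ε_FA)/(p_b−β)² }`,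
the intended receiver sees more than `β·k` errors with probability at most `ε_FR`
and the blocked receiver sees at most `β·k` errors with probability at most
`ε_FA`. -/
theorem dfa_secure_challenge_response (pi pb β εFR εFA : ℝ) (k : ℕ)
    (hpi : 0 < pi) (hpiβ : pi < β) (hβpb : β < pb) (hpb : pb ≤ 1)
    (hFR0 : 0 < εFR) (hFR1 : εFR ≤ 1) (hFA0 : 0 < εFA) (hFA1 : εFA ≤ 1)
    (hk : max ((pi + β) * Real.log (1 / εFR) / (β - pi) ^ 2)
              (2 * pb * Real.log (1 / εFA) / (pb - β) ^ 2) ≤ (k : ℝ)) :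
    (∑ i ∈ (Finset.range (k + 1)).filter (fun i : ℕ => β * k < (i : ℝ)),
        (k.choose i : ℝ) * pi ^ i * (1 - pi) ^ (k - i)) ≤ εFR
    ∧ (∑ i ∈ (Finset.range (k + 1)).filter (fun i : ℕ => (i : ℝ) ≤ β * k),
        (k.choose i : ℝ) * pb ^ i * (1 - pb) ^ (k - i)) ≤ εFA := by
  have hβ0 : 0 < β := lt_trans hpi hpiβ
  have hpb0 : 0 < pb := lt_trans hβ0 hβpb
  have hk0 : (0:ℝ) ≤ k := Nat.cast_nonneg k
  constructor
  · -- intended receiver: upper tail, p = pi, t = log (β/pi) > 0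
    set t := Real.log (β / pi) with ht
    have hrat : (1:ℝ) < β / pi := (one_lt_div hpi).2 hpiβ
    have ht0 : 0 < t := Real.log_pos hrat
    have hbound := chernoff_sum pi t (t * β * k) (le_of_lt hpi) (by linarith) k
      (fun i : ℕ => β * k < (i : ℝ))
      (by intro i hi
          nlinarith [mul_nonneg (le_of_lt ht0) (by linarith : (0:ℝ) ≤ (i:ℝ) - β * k)])
    have hexp : pi * Real.exp t + (1 - pi) = β + 1 - pi := by
      rw [ht, Real.exp_log (by positivity)]
      field_simp
      try ring
    rw [hexp] at hbound
    have hstep : (β + 1 - pi) ^ k ≤ Real.exp ((β - pi) * k) := by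
      have h1 : β + 1 - pi ≤ Real.exp (β - pi) := by
        have := Real.add_one_le_exp (β - pi)
        linarith
      calc (β + 1 - pi) ^ k ≤ Real.exp (β - pi) ^ k :=
            pow_le_pow_left₀ (by linarith) h1 k
        _ = Real.exp ((β - pi) * k) := by
            rw [mul_comm, Real.exp_nat_mul]
    have hfinal : Real.exp (-(t * β * k)) * (β + 1 - pi) ^ k ≤ εFR := by
      have h2 : Real.exp (-(t * β * k)) * (β + 1 - pi) ^ k
          ≤ Real.exp (-(t * β * k)) * Real.exp ((β - pi) * k) :=
        mul_le_mul_of_nonneg_left hstep (Real.exp_nonneg _)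
      rw [← Real.exp_add] at h2
      have h3 : Real.exp (-(t * β * k) + (β - pi) * k) ≤ εFR := by
        rw [← Real.exp_log hFR0]
        apply Real.exp_le_exp.2
        have hL : Real.log (1/εFR) = - Real.log εFR := by
          rw [one_div, Real.log_inv]
        have hβpi : (0:ℝ) < β + pi := by linarith
        have hd : (0:ℝ) < (β - pi)^2 := pow_pos (by linarith) 2
        have hkge : (pi + β) * Real.log (1 / εFR) / (β - pi) ^ 2 ≤ (k:ℝ) :=
          le_trans (le_max_left _ _) hk
        have hLk : (pi + β) * Real.log (1 / εFR) ≤ (k:ℝ) * (β - pi)^2 := by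
          rw [div_le_iff₀ hd] at hkge; linarith
        have hana : β - pi - β * t ≤ -((β - pi)^2 / (β + pi)) := by
          have hlog := aux_log_lb (le_of_lt hrat)
          have heq : 2 * (β / pi - 1) / (β / pi + 1) = 2 * (β - pi) / (β + pi) := by
            rw [div_eq_div_iff (by positivity) (by positivity)]
            field_simp
            try ring
          rw [heq] at hlog
          have key : β * (2 * (β - pi) / (β + pi)) = (β - pi) + (β - pi)^2/(β+pi) := by
            field_simp
            try ring
          have h9 := mul_le_mul_of_nonneg_left hlog (le_of_lt hβ0)
          rw [key] at h9
          rw [ht]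
          linarith
        have hineq : Real.log (1/εFR) ≤ (k:ℝ) * ((β - pi)^2 / (β + pi)) := by
          have heq2 : (k:ℝ) * ((β - pi)^2 / (β + pi)) = (k:ℝ) * (β - pi)^2 / (β + pi) := by
            ring
          rw [heq2, le_div_iff₀ hβpi]
          nlinarith [hLk]
        have hmul := mul_le_mul_of_nonneg_left hana hk0
        rw [hL] at hineq
        nlinarith [hmul, hineq]
      calc Real.exp (-(t * β * k)) * (β + 1 - pi) ^ k
          ≤ Real.exp (-(t * β * k) + (β - pi) * k) := h2
        _ ≤ εFR := h3
    exact le_trans hbound hfinal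
  · -- blocked receiver: lower tail, p = pb, t = log (β/pb) < 0
    set t := Real.log (β / pb) with ht
    have hrat : β / pb < 1 := (div_lt_one hpb0).2 hβpb
    have hrat0 : 0 < β / pb := by positivity
    have ht0 : t < 0 := Real.log_neg hrat0 hrat
    have hbound := chernoff_sum pb t (t * β * k) (le_of_lt hpb0) hpb k
      (fun i : ℕ => (i : ℝ) ≤ β * k)
      (by intro i hi
          nlinarith [mul_nonneg (by linarith : (0:ℝ) ≤ -t) (by linarith : (0:ℝ) ≤ β * k - (i:ℝ))])
    have hexp : pb * Real.exp t + (1 - pb) = β + 1 - pb := by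
      rw [ht, Real.exp_log (by positivity)]
      field_simp
      try ring
    rw [hexp] at hbound
    have hstep : (β + 1 - pb) ^ k ≤ Real.exp ((β - pb) * k) := by
      have h1 : β + 1 - pb ≤ Real.exp (β - pb) := by
        have := Real.add_one_le_exp (β - pb)
        linarith
      calc (β + 1 - pb) ^ k ≤ Real.exp (β - pb) ^ k :=
            pow_le_pow_left₀ (by linarith) h1 k
        _ = Real.exp ((β - pb) * k) := by
            rw [mul_comm, Real.exp_nat_mul]
    have hfinal : Real.exp (-(t * β * k)) * (β + 1 - pb) ^ k ≤ εFA := by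
      have h2 : Real.exp (-(t * β * k)) * (β + 1 - pb) ^ k
          ≤ Real.exp (-(t * β * k)) * Real.exp ((β - pb) * k) :=
        mul_le_mul_of_nonneg_left hstep (Real.exp_nonneg _)
      rw [← Real.exp_add] at h2
      have h3 : Real.exp (-(t * β * k) + (β - pb) * k) ≤ εFA := by
        rw [← Real.exp_log hFA0]
        apply Real.exp_le_exp.2
        have hL : Real.log (1/εFA) = - Real.log εFA := by
          rw [one_div, Real.log_inv]
        have hd : (0:ℝ) < (pb - β)^2 := pow_pos (by linarith) 2
        have hkge : 2 * pb * Real.log (1 / εFA) / (pb - β) ^ 2 ≤ (k:ℝ) :=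
          le_trans (le_max_right _ _) hk
        have hLk : 2 * pb * Real.log (1 / εFA) ≤ (k:ℝ) * (pb - β)^2 := by
          rw [div_le_iff₀ hd] at hkge; linarith
        have hana : β - pb - β * t ≤ -((pb - β)^2 / (2 * pb)) := by
          have hent := aux_entropy_lb hrat0 (le_of_lt hrat)
          have h6 := mul_le_mul_of_nonneg_left hent (le_of_lt hpb0)
          have h7 : pb * ((1 - β/pb)^2/2) = (pb - β)^2/(2*pb) := by
            field_simp
            try ring
          have h8 : pb * (1 - β/pb + β/pb * Real.log (β/pb)) = (pb - β) + β * t := by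
            rw [ht]
            field_simp
            try ring
          rw [h7, h8] at h6
          linarith
        have hineq : Real.log (1/εFA) ≤ (k:ℝ) * ((pb - β)^2 / (2 * pb)) := by
          have heq2 : (k:ℝ) * ((pb - β)^2 / (2 * pb)) = (k:ℝ) * (pb - β)^2 / (2 * pb) := by
            ring
          rw [heq2, le_div_iff₀ (by positivity)]
          nlinarith [hLk]
        have hmul := mul_le_mul_of_nonneg_left hana hk0
        rw [hL] at hineq
        nlinarith [hmul, hineq]
      calc Real.exp (-(t * β * k)) * (β + 1 - pb) ^ k
          ≤ Real.exp (-(t * β * k) + (β - pb) * k) := h2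
        _ ≤ εFA := h3
    exact le_trans hbound hfinal
end
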